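/- arXiv:2006.02066 — 7 statements merged into one kernel-verified Lean document; each statement's English description precedes it below -/
import Mathlib

section
/- Let 0 < r0 < R ≤ ∞, let ψ ∈ D(r0,R), and let E ⊆ (r0,R) be a measurable set whose ψ-measure is finite, i.e. ∫_E ψ'(t) dt < ∞. Then the upper e^ψ-density of E equals 0, i.e. limsup_{r→R⁻} e^{−ψ(r)} ∫_{E∩[r0,r)} ψ'(t) e^{ψ(t)} dt = 0. -/
open MeasureTheory Filter Set

/-- The filter of real numbers tending to `R` from below (equals `atTop` when `R = ⊤`). -/
noncomputable def densFilter (R : EReal) : Filter ℝ :=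
  Filter.comap (fun x : ℝ => (x : EReal)) (nhdsWithin R (Set.Iio R))

/-- The interval `(r0, R)` as a set of reals. -/
def psiDomain (r0 : ℝ) (R : EReal) : Set ℝ := {r : ℝ | r0 < r ∧ (r : EReal) < R}

/-- Barry's class `𝒟(r0,R)`: positive, unbounded, differentiable, strictly increasing
functions on `(r0, R)`. -/
structure PsiClass (r0 : ℝ) (R : EReal) (ψ : ℝ → ℝ) : Prop where
  pos : ∀ r ∈ psiDomain r0 R, 0 < ψ r
  unbounded : Filter.Tendsto ψ (densFilter R) Filter.atTop
  differentiable : ∀ r ∈ psiDomain r0 R, DifferentiableAt ℝ ψ r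
  strictMono : StrictMonoOn ψ (psiDomain r0 R)

/-- The upper `ψ`-density of a set `E ⊆ (r0, R)`:
`limsup_{r→R⁻} (1/ψ(r)) ∫_{E∩[r0,r)} ψ'(t) dt`. -/
noncomputable def upperPsiDens (r0 : ℝ) (R : EReal) (ψ : ℝ → ℝ) (E : Set ℝ) : ℝ :=
  Filter.limsup (fun r => (∫ t in E ∩ Set.Ico r0 r, deriv ψ t) / ψ r) (densFilter R)

/-- The lower `ψ`-density of a set `E ⊆ (r0, R)`. -/
noncomputable def lowerPsiDens (r0 : ℝ) (R : EReal) (ψ : ℝ → ℝ) (E : Set ℝ) : ℝ :=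
  Filter.liminf (fun r => (∫ t in E ∩ Set.Ico r0 r, deriv ψ t) / ψ r) (densFilter R)

lemma densFilter_eventually {R : EReal} {a : ℝ} (ha : (a : EReal) < R) :
    ∀ᶠ x in densFilter R, a < x ∧ (x : EReal) < R := by
  have h1 : Set.Ioi (a : EReal) ∩ Set.Iio R ∈ nhdsWithin R (Set.Iio R) :=
    Filter.inter_mem (mem_nhdsWithin_of_mem_nhds (Ioi_mem_nhds ha)) self_mem_nhdsWithin
  have h2 : ((fun x : ℝ => (x : EReal)) ⁻¹' (Set.Ioi (a : EReal) ∩ Set.Iio R)) ∈ densFilter R :=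
    Filter.preimage_mem_comap h1
  filter_upwards [h2] with x hx
  exact ⟨EReal.coe_lt_coe_iff.1 hx.1, hx.2⟩

lemma densFilter_neBot {R : EReal} {a : ℝ} (ha : (a : EReal) < R) : (densFilter R).NeBot := by
  refine Filter.comap_neBot fun t ht => ?_
  rw [mem_nhdsWithin] at ht
  obtain ⟨U, hUopen, hRU, hsub⟩ := ht
  obtain ⟨l, hl, hIoc⟩ := exists_Ioc_subset_of_mem_nhds (hUopen.mem_nhds hRU) ⟨(a : EReal), ha⟩
  obtain ⟨q, hq1, hq2⟩ := EReal.exists_rat_btwn_of_lt hl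
  exact ⟨(q : ℝ), hsub ⟨hIoc ⟨hq1, le_of_lt hq2⟩, hq2⟩⟩

lemma densFilter_countablyGenerated (R : EReal) : (densFilter R).IsCountablyGenerated := by
  rw [densFilter]; infer_instance

lemma deriv_nonneg_of_strictMonoOn {s : Set ℝ} (hs : IsOpen s) {f : ℝ → ℝ}
    (hf : StrictMonoOn f s) {x : ℝ} (hx : x ∈ s) (hd : DifferentiableAt ℝ f x) :
    0 ≤ deriv f x := by
  have h := hd.hasDerivAt
  rw [hasDerivAt_iff_tendsto_slope] at h
  have h' : Tendsto (slope f x) (nhdsWithin x (Set.Ioi x)) (nhds (deriv f x)) :=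
    h.mono_left (nhdsWithin_mono _ fun y hy => ne_of_gt hy)
  refine ge_of_tendsto h' ?_
  have hmem : s ∩ Set.Ioi x ∈ nhdsWithin x (Set.Ioi x) :=
    Filter.inter_mem (mem_nhdsWithin_of_mem_nhds (hs.mem_nhds hx)) self_mem_nhdsWithin
  filter_upwards [hmem] with y hy
  rw [slope_def_field]
  exact div_nonneg (sub_nonneg.2 (hf hx hy.1 hy.2).le) (sub_nonneg.2 (le_of_lt hy.2))

lemma psiDomain_isOpen (r0 : ℝ) (R : EReal) : IsOpen (psiDomain r0 R) := by
  have : psiDomain r0 R = Set.Ioi r0 ∩ ((fun x : ℝ => (x : EReal)) ⁻¹' Set.Iio R) := rfl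
  rw [this]
  exact isOpen_Ioi.inter (isOpen_Iio.preimage continuous_coe_real_ereal)

lemma exists_tail_lt (r0 : ℝ) (R : EReal) (hr0R : (r0 : EReal) < R)
    {E : Set ℝ} (hEmeas : MeasurableSet E) (hEsub : E ⊆ psiDomain r0 R)
    {f : ℝ → ℝ} (hfin : IntegrableOn f E) {ε : ℝ} (hε : 0 < ε) :
    ∃ s ∈ psiDomain r0 R, ∫ t in E \ Set.Iio s, f t < ε := by
  haveI hne := densFilter_neBot hr0R
  haveI hcg := densFilter_countablyGenerated R
  obtain ⟨u, hu⟩ := (densFilter R).exists_seq_tendsto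
  have hu' : ∀ᶠ n in atTop, u n ∈ psiDomain r0 R := hu.eventually (densFilter_eventually hr0R)
  obtain ⟨N, hN⟩ := eventually_atTop.1 hu'
  set v : ℕ → ℝ := fun n => (Finset.range (n + 1)).sup' (by simp) (fun i => u (N + i)) with hv
  have hvmem : ∀ n, v n ∈ psiDomain r0 R := by
    intro n
    simp only [hv]
    refine Finset.sup'_mem (psiDomain r0 R) ?_ _ _ _ (fun i _ => hN (N + i) (Nat.le_add_right N i))
    intro x hx y hy
    rcases le_total x y with h | h
    · simpa [sup_of_le_right h] using hy
    · simpa [sup_of_le_left h] using hx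
  have hvmono : Monotone v := by
    intro m n hmn
    simp only [hv]
    exact Finset.sup'_mono _ (Finset.range_subset_range.2 (by omega)) _
  have hunion : (⋃ n, E ∩ Set.Iio (v n)) = E := by
    apply Set.Subset.antisymm
    · exact Set.iUnion_subset fun n => Set.inter_subset_left
    · intro t ht
      have h2 : ∀ᶠ n in atTop, t < u n :=
        (hu.eventually (densFilter_eventually (hEsub ht).2)).mono fun n hn => hn.1
      obtain ⟨m, hm⟩ := eventually_atTop.1 h2
      have hk : t < u (max m N) := hm _ (le_max_left _ _)
      have hNk : N ≤ max m N := le_max_right _ _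
      refine Set.mem_iUnion.2 ⟨max m N - N, ht, ?_⟩
      have hle : u (N + (max m N - N))
          ≤ (Finset.range (max m N - N + 1)).sup' (by simp) (fun i => u (N + i)) :=
        Finset.le_sup' (fun i => u (N + i)) (Finset.self_mem_range_succ (max m N - N))
      rw [Nat.add_sub_cancel' hNk] at hle
      simp only [hv]
      exact lt_of_lt_of_le hk hle
  have hmono : Monotone fun n => E ∩ Set.Iio (v n) := fun m n h =>
    Set.inter_subset_inter_right _ (Set.Iio_subset_Iio (hvmono h))
  have hmeasn : ∀ n, MeasurableSet (E ∩ Set.Iio (v n)) := fun n => hEmeas.inter measurableSet_Iio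
  have hint : IntegrableOn f (⋃ n, E ∩ Set.Iio (v n)) := by rw [hunion]; exact hfin
  have htend := MeasureTheory.tendsto_setIntegral_of_monotone hmeasn hmono hint
  rw [hunion] at htend
  have hev : ∀ᶠ n in atTop, (∫ t in E, f t) - ε < ∫ t in E ∩ Set.Iio (v n), f t :=
    htend.eventually (eventually_gt_nhds (by linarith))
  obtain ⟨n, hn⟩ := hev.exists
  refine ⟨v n, hvmem n, ?_⟩
  have hsplit : (∫ t in E ∩ Set.Iio (v n), f t) + ∫ t in E \ Set.Iio (v n), f t
      = ∫ t in E, f t := by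
    rw [← MeasureTheory.setIntegral_union
        (Set.disjoint_sdiff_right.mono_left Set.inter_subset_right)
        (hEmeas.diff measurableSet_Iio)
        (hfin.mono_set Set.inter_subset_left) (hfin.mono_set Set.diff_subset),
      Set.inter_union_diff]
  linarith

theorem statement0 (r0 : ℝ) (R : EReal) (hr0 : 0 < r0) (hr0R : (r0 : EReal) < R)
    (ψ : ℝ → ℝ) (hψ : PsiClass r0 R ψ)
    (E : Set ℝ) (hEmeas : MeasurableSet E) (hEsub : E ⊆ psiDomain r0 R)
    (hfin : IntegrableOn (deriv ψ) E) :
    upperPsiDens r0 R (fun t => Real.exp (ψ t)) E = 0 := by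
  haveI hne : (densFilter R).NeBot := densFilter_neBot hr0R
  have hDopen := psiDomain_isOpen r0 R
  have hψ'nn : ∀ t ∈ psiDomain r0 R, 0 ≤ deriv ψ t := fun t ht =>
    deriv_nonneg_of_strictMonoOn hDopen hψ.strictMono ht (hψ.differentiable t ht)
  have hder : ∀ t ∈ psiDomain r0 R, deriv (fun t => Real.exp (ψ t)) t
      = Real.exp (ψ t) * deriv ψ t := fun t ht => _root_.deriv_exp (hψ.differentiable t ht)
  set h : ℝ → ℝ := deriv (fun t => Real.exp (ψ t)) with hh
  have hhmeas : Measurable h := measurable_deriv _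
  set I := ∫ t in E, deriv ψ t with hIdef
  have hInn : 0 ≤ I :=
    MeasureTheory.setIntegral_nonneg hEmeas fun t ht => hψ'nn t (hEsub ht)
  unfold upperPsiDens
  suffices htend : Tendsto (fun r => (∫ t in E ∩ Set.Ico r0 r, h t) / Real.exp (ψ r))
      (densFilter R) (nhds 0) from htend.limsup_eq
  rw [Metric.tendsto_nhds]
  intro ε hε
  obtain ⟨s, hs, htail⟩ := exists_tail_lt r0 R hr0R hEmeas hEsub hfin (half_pos hε)
  have hexp := (Real.tendsto_exp_atTop.comp hψ.unbounded).eventually_ge_atTop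
    (2 / ε * (Real.exp (ψ s) * I) + 1)
  filter_upwards [densFilter_eventually hr0R, densFilter_eventually hs.2, hexp]
    with r hrdom hsr hbig
  have hrD : r ∈ psiDomain r0 R := hrdom
  have hsrlt : s < r := hsr.1
  have hP : (0 : ℝ) < Real.exp (ψ r) := Real.exp_pos _
  have hEset : E ∩ Set.Ico r0 r = E ∩ Set.Iio r := by
    ext t
    constructor
    · rintro ⟨ht, _, h2⟩; exact ⟨ht, h2⟩
    · rintro ⟨ht, h2⟩; exact ⟨ht, le_of_lt (hEsub ht).1, h2⟩
  have hbound : IntegrableOn (fun t => Real.exp (ψ r) * deriv ψ t) (E ∩ Set.Iio r) :=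
    (hfin.mono_set Set.inter_subset_left).const_mul _
  have hintr : IntegrableOn h (E ∩ Set.Iio r) := by
    refine MeasureTheory.Integrable.mono hbound hhmeas.aestronglyMeasurable.restrict ?_
    filter_upwards [MeasureTheory.ae_restrict_mem (hEmeas.inter measurableSet_Iio)] with t ht
    have htD := hEsub ht.1
    rw [Real.norm_eq_abs, Real.norm_eq_abs, hder t htD,
      abs_of_nonneg (mul_nonneg (Real.exp_pos _).le (hψ'nn t htD)),
      abs_of_nonneg (mul_nonneg hP.le (hψ'nn t htD))]
    exact mul_le_mul_of_nonneg_right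
      (Real.exp_le_exp.2 (hψ.strictMono.monotoneOn htD hrD ht.2.le)) (hψ'nn t htD)
  have hsplitset : E ∩ Set.Iio r = (E ∩ Set.Iio s) ∪ (E ∩ Set.Ico s r) := by
    rw [← Set.inter_union_distrib_left, Set.Iio_union_Ico_eq_Iio hsrlt.le]
  have hdisj : Disjoint (E ∩ Set.Iio s) (E ∩ Set.Ico s r) := by
    refine Set.disjoint_left.2 ?_
    rintro t ⟨_, ht1⟩ ⟨_, ht2, _⟩
    exact absurd ht1 (not_lt.2 ht2)
  have hint1 : IntegrableOn h (E ∩ Set.Iio s) :=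
    hintr.mono_set (by rw [hsplitset]; exact Set.subset_union_left)
  have hint2 : IntegrableOn h (E ∩ Set.Ico s r) :=
    hintr.mono_set (by rw [hsplitset]; exact Set.subset_union_right)
  have hsplit : (∫ t in E ∩ Set.Iio r, h t)
      = (∫ t in E ∩ Set.Iio s, h t) + ∫ t in E ∩ Set.Ico s r, h t := by
    rw [hsplitset,
      MeasureTheory.setIntegral_union hdisj (hEmeas.inter measurableSet_Ico) hint1 hint2]
  have hT1 : (∫ t in E ∩ Set.Iio s, h t) ≤ Real.exp (ψ s) * I := by
    calc (∫ t in E ∩ Set.Iio s, h t)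
        ≤ ∫ t in E ∩ Set.Iio s, Real.exp (ψ s) * deriv ψ t := by
          refine MeasureTheory.setIntegral_mono_on hint1
            ((hfin.mono_set Set.inter_subset_left).const_mul _)
            (hEmeas.inter measurableSet_Iio) ?_
          intro t ht
          have htD := hEsub ht.1
          rw [hder t htD]
          exact mul_le_mul_of_nonneg_right
            (Real.exp_le_exp.2 (hψ.strictMono htD hs ht.2).le) (hψ'nn t htD)
      _ = Real.exp (ψ s) * ∫ t in E ∩ Set.Iio s, deriv ψ t :=
          MeasureTheory.integral_const_mul _ _
      _ ≤ Real.exp (ψ s) * I := by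
          refine mul_le_mul_of_nonneg_left ?_ (Real.exp_pos _).le
          refine MeasureTheory.setIntegral_mono_set hfin ?_
            (HasSubset.Subset.eventuallyLE Set.inter_subset_left)
          filter_upwards [MeasureTheory.ae_restrict_mem hEmeas] with t ht
          exact hψ'nn t (hEsub ht)
  have hT2 : (∫ t in E ∩ Set.Ico s r, h t)
      ≤ Real.exp (ψ r) * ∫ t in E \ Set.Iio s, deriv ψ t := by
    calc (∫ t in E ∩ Set.Ico s r, h t)
        ≤ ∫ t in E ∩ Set.Ico s r, Real.exp (ψ r) * deriv ψ t := by
          refine MeasureTheory.setIntegral_mono_on hint2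
            ((hfin.mono_set Set.inter_subset_left).const_mul _)
            (hEmeas.inter measurableSet_Ico) ?_
          intro t ht
          have htD := hEsub ht.1
          rw [hder t htD]
          exact mul_le_mul_of_nonneg_right
            (Real.exp_le_exp.2 (hψ.strictMono.monotoneOn htD hrD ht.2.2.le)) (hψ'nn t htD)
      _ = Real.exp (ψ r) * ∫ t in E ∩ Set.Ico s r, deriv ψ t :=
          MeasureTheory.integral_const_mul _ _
      _ ≤ Real.exp (ψ r) * ∫ t in E \ Set.Iio s, deriv ψ t := by
          refine mul_le_mul_of_nonneg_left ?_ hP.le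
          refine MeasureTheory.setIntegral_mono_set (hfin.mono_set Set.diff_subset) ?_
            (HasSubset.Subset.eventuallyLE ?_)
          · filter_upwards [MeasureTheory.ae_restrict_mem (hEmeas.diff measurableSet_Iio)]
              with t ht
            exact hψ'nn t (hEsub ht.1)
          · rintro t ⟨ht, hts, _⟩
            exact ⟨ht, not_lt.2 hts⟩
  have hNnn : 0 ≤ ∫ t in E ∩ Set.Ico r0 r, h t := by
    refine MeasureTheory.setIntegral_nonneg (hEmeas.inter measurableSet_Ico) ?_
    intro t ht
    have htD := hEsub ht.1
    rw [hder t htD]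
    exact mul_nonneg (Real.exp_pos _).le (hψ'nn t htD)
  rw [Real.dist_eq, sub_zero, abs_of_nonneg (div_nonneg hNnn hP.le), div_lt_iff₀ hP]
  rw [hEset, hsplit]
  have hc : ε / 2 * (2 / ε * (Real.exp (ψ s) * I) + 1) = Real.exp (ψ s) * I + ε / 2 := by
    field_simp
  simp only [Function.comp] at hbig
  have hlast : Real.exp (ψ s) * I < ε / 2 * Real.exp (ψ r) := by
    have h3 := mul_le_mul_of_nonneg_left hbig (half_pos hε).le
    rw [hc] at h3
    linarith
  have h2 : Real.exp (ψ r) * (∫ t in E \ Set.Iio s, deriv ψ t)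
      < Real.exp (ψ r) * (ε / 2) := mul_lt_mul_of_pos_left htail hP
  linarith
end

section
/- Let 0 < r0 < R ≤ ∞, let ψ ∈ D(r0,R), and let f and g be non-decreasing real-valued functions on (r0,R) satisfying f(r) ≤ g(r) for all r ∈ (r0,R) \ E, where E is a measurable set with upper ψ-density strictly less than 1. Then for any real α > (1 − (upper ψ-density of E))⁻¹, there exists r' ∈ (r0,R) such that f(r) ≤ g(s(r)) for all r ∈ (r',R), where s(r) = ψ⁻¹(α·ψ(r)). -/
open MeasureTheory Filter Set Topology

lemma densFilter_hasBasis {R : EReal} {a0 : ℝ} (h : (a0 : EReal) < R) :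
    (densFilter R).HasBasis (fun a : ℝ => (a : EReal) < R)
      (fun a => {x : ℝ | a < x ∧ (x : EReal) < R}) := by
  induction R using EReal.rec with
  | bot => exact absurd h (not_lt_bot)
  | coe b =>
      have hb : densFilter (b : EReal) = 𝓝[<] b := by
        unfold densFilter
        rw [nhdsWithin, Filter.comap_inf, Filter.comap_principal, EReal.nhds_coe,
          Filter.comap_map EReal.coe_injective, nhdsWithin]
        congr 1
        ext x
        simp [EReal.coe_lt_coe_iff]
      rw [hb]
      refine (nhdsLT_basis_of_exists_lt ⟨b - 1, by linarith⟩).to_hasBasis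
        (fun a ha => ⟨a, by exact_mod_cast ha, fun x hx => ?_⟩)
        (fun a ha => ⟨a, by exact_mod_cast ha, fun x hx => ?_⟩)
      · exact ⟨hx.1, by exact_mod_cast hx.2⟩
      · exact ⟨hx.1, by exact_mod_cast hx.2⟩
  | top =>
      have := (nhdsWithin_hasBasis EReal.nhds_top_basis (Iio (⊤ : EReal))).comap
        (fun x : ℝ => (x : EReal))
      refine this.to_hasBasis (fun a _ => ⟨a, EReal.coe_lt_top a, fun x hx => ?_⟩)
        (fun a _ => ⟨a, trivial, fun x hx => ?_⟩)
      · simp only [mem_setOf_eq] at hx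
        simp only [mem_preimage, mem_inter_iff, mem_Ioi, mem_Iio]
        exact ⟨by exact_mod_cast hx.1, hx.2⟩
      · simp only [mem_preimage, mem_inter_iff, mem_Ioi, mem_Iio] at hx
        exact ⟨by exact_mod_cast hx.1, hx.2⟩

lemma exists_real_btwn {R : EReal} {a : ℝ} (h : (a : EReal) < R) :
    ∃ x : ℝ, a < x ∧ (x : EReal) < R := by
  obtain ⟨c, h1, h2⟩ := exists_between h
  lift c to ℝ using ⟨(h2.trans_le le_top).ne, ((EReal.bot_lt_coe a).trans h1).ne'⟩
  exact ⟨c, by exact_mod_cast h1, h2⟩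

theorem statement1 (r0 : ℝ) (R : EReal) (hr0 : 0 < r0) (hr0R : (r0 : EReal) < R)
    (ψ : ℝ → ℝ) (hψ : PsiClass r0 R ψ)
    (f g : ℝ → ℝ)
    (hf : MonotoneOn f (psiDomain r0 R)) (hg : MonotoneOn g (psiDomain r0 R))
    (E : Set ℝ) (hEmeas : MeasurableSet E) (hEsub : E ⊆ psiDomain r0 R)
    (hfg : ∀ r ∈ psiDomain r0 R \ E, f r ≤ g r)
    (hdens : upperPsiDens r0 R ψ E < 1)
    (α : ℝ) (hα : (1 - upperPsiDens r0 R ψ E)⁻¹ < α) :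
    ∃ r' ∈ psiDomain r0 R, ∀ r, r' < r → (r : EReal) < R →
      f r ≤ g (Function.invFunOn ψ (psiDomain r0 R) (α * ψ r)) := by
  set D := psiDomain r0 R with hD
  set Q : ℝ → ℝ := fun r => (∫ t in E ∩ Set.Ico r0 r, deriv ψ t) / ψ r with hQ
  set d := upperPsiDens r0 R ψ E with hd
  have hdQ : d = Filter.limsup Q (densFilter R) := rfl
  have hbasis := densFilter_hasBasis hr0R
  -- basic facts about D
  have hIcc : ∀ {a b : ℝ}, a ∈ D → b ∈ D → Icc a b ⊆ D := by
    rintro a b ⟨ha1, ha2⟩ ⟨hb1, hb2⟩ z ⟨hz1, hz2⟩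
    exact ⟨ha1.trans_le hz1, lt_of_le_of_lt (by exact_mod_cast hz2) hb2⟩
  have hmono : MonotoneOn ψ D := hψ.strictMono.monotoneOn
  -- D belongs to the filter
  have hDmem : ∀ᶠ x in densFilter R, x ∈ D := by
    filter_upwards [hbasis.mem_of_mem hr0R] with x hx
    exact hx
  haveI hNB : (densFilter R).NeBot := by
    refine hbasis.neBot_iff.2 fun {a} ha => ?_
    obtain ⟨x, hx1, hx2⟩ := exists_real_btwn ha
    exact ⟨x, hx1, hx2⟩
  -- nonnegativity of the derivative on D
  have hderiv_nonneg : ∀ x ∈ D, 0 ≤ deriv ψ x := by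
    intro x hx
    obtain ⟨b, hb1, hb2⟩ := exists_real_btwn hx.2
    have hbD : b ∈ D := ⟨hx.1.trans hb1, hb2⟩
    have htends : Tendsto (slope ψ x) (𝓝[>] x) (𝓝 (deriv ψ x)) :=
      (hasDerivAt_iff_tendsto_slope.1 (hψ.differentiable x hx).hasDerivAt).mono_left
        (nhdsWithin_mono x fun y hy => ne_of_gt hy)
    refine ge_of_tendsto htends ?_
    filter_upwards [Ioc_mem_nhdsGT hb1] with y hy
    rw [slope_def_field]
    have hyD : y ∈ D := hIcc hx hbD ⟨hy.1.le, hy.2⟩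
    exact div_nonneg (by linarith [hmono hx hyD hy.1.le]) (by linarith [hy.1])
  -- FTC on compact subintervals of D
  have hcont : ∀ {a b : ℝ}, a ∈ D → b ∈ D → ContinuousOn ψ (Icc a b) := fun {a b} ha hb z hz =>
    ((hψ.differentiable z (hIcc ha hb hz)).continuousAt).continuousWithinAt
  have hFTC : ∀ {a b : ℝ}, a ∈ D → b ∈ D → a ≤ b →
      IntegrableOn (deriv ψ) (Ioc a b) ∧ (∫ t in Ioc a b, deriv ψ t) = ψ b - ψ a := by
    intro a b ha hb hab
    have hdiff : ∀ x ∈ uIcc a b, DifferentiableAt ℝ ψ x := by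
      rw [uIcc_of_le hab]
      exact fun x hx => hψ.differentiable x (hIcc ha hb hx)
    have hint : IntervalIntegrable (deriv ψ) volume a b := by
      apply intervalIntegral.intervalIntegrable_deriv_of_nonneg
      · rw [uIcc_of_le hab]; exact hcont ha hb
      · rw [min_eq_left hab, max_eq_right hab]
        exact fun x hx => (hψ.differentiable x (hIcc ha hb (Ioo_subset_Icc_self hx))).hasDerivAt
      · rw [min_eq_left hab, max_eq_right hab]
        exact fun x hx => hderiv_nonneg x (hIcc ha hb (Ioo_subset_Icc_self hx))
    have heq := intervalIntegral.integral_deriv_eq_sub hdiff hint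
    rw [intervalIntegral.integral_of_le hab] at heq
    exact ⟨hint.1, heq⟩
  -- integrability of deriv ψ on (r0, x] for x ∈ D
  have hIoc_sub : ∀ {x : ℝ}, x ∈ D → Ioc r0 x ⊆ D := by
    rintro x hx z ⟨hz1, hz2⟩
    exact ⟨hz1, lt_of_le_of_lt (by exact_mod_cast hz2) hx.2⟩
  have hintOn : ∀ x ∈ D, IntegrableOn (deriv ψ) (Ioc r0 x) := by
    intro x hx
    set a : ℕ → ℝ := fun n => r0 + (x - r0) / (n + 1) with ha
    have hx0 : r0 < x := hx.1
    have haD : ∀ n, a n ∈ D ∧ a n ≤ x := by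
      intro n
      have h1 : 0 < (x - r0) / (n + 1) := div_pos (by linarith) (by positivity)
      have h2 : (x - r0) / (n + 1) ≤ x - r0 := by
        apply div_le_self (by linarith)
        exact le_add_of_nonneg_left (Nat.cast_nonneg n)
      have h3 : r0 < a n := by simp only [ha]; linarith
      have h4 : a n ≤ x := by simp only [ha]; linarith
      exact ⟨⟨h3, lt_of_le_of_lt (by exact_mod_cast h4) hx.2⟩, h4⟩
    have hatend : Tendsto a atTop (𝓝 r0) := by
      have h1 : Tendsto (fun n : ℕ => (x - r0) / (n + 1)) atTop (𝓝 0) := by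
        have := (tendsto_const_div_atTop_nhds_zero_nat (x - r0)).comp
          (tendsto_add_atTop_nat 1)
        simpa [Function.comp_def] using this
      have := h1.const_add r0
      simpa using this
    apply integrableOn_Ioc_of_intervalIntegral_norm_bounded_left
      (I := ψ x) (a := a) (l := atTop)
      (fun n => ((hFTC (haD n).1 hx (haD n).2).1)) hatend
    filter_upwards with n
    have hsub : Ioc (a n) x ⊆ D := fun z hz => hIcc (haD n).1 hx ⟨hz.1.le, hz.2⟩
    have : (∫ t in Ioc (a n) x, ‖deriv ψ t‖) = ∫ t in Ioc (a n) x, deriv ψ t := by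
      apply setIntegral_congr_fun measurableSet_Ioc
      intro z hz
      exact Real.norm_of_nonneg (hderiv_nonneg z (hsub hz))
    rw [this, (hFTC (haD n).1 hx (haD n).2).2]
    have := hψ.pos _ (haD n).1
    linarith
  -- the integral over (r0, x] is at most ψ x
  have hbound : ∀ x ∈ D, (∫ t in Ioc r0 x, deriv ψ t) ≤ ψ x := by
    intro x hx
    set a : ℕ → ℝ := fun n => r0 + (x - r0) / (n + 1) with ha
    have hx0 : r0 < x := hx.1
    have haD : ∀ n, a n ∈ D ∧ a n ≤ x := by
      intro n
      have h1 : 0 < (x - r0) / (n + 1) := div_pos (by linarith) (by positivity)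
      have h2 : (x - r0) / (n + 1) ≤ x - r0 := by
        apply div_le_self (by linarith)
        exact le_add_of_nonneg_left (Nat.cast_nonneg n)
      have h3 : r0 < a n := by simp only [ha]; linarith
      have h4 : a n ≤ x := by simp only [ha]; linarith
      exact ⟨⟨h3, lt_of_le_of_lt (by exact_mod_cast h4) hx.2⟩, h4⟩
    have hatend : Tendsto a atTop (𝓝 r0) := by
      have h1 : Tendsto (fun n : ℕ => (x - r0) / (n + 1)) atTop (𝓝 0) := by
        have := (tendsto_const_div_atTop_nhds_zero_nat (x - r0)).comp
          (tendsto_add_atTop_nat 1)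
        simpa [Function.comp_def] using this
      have := h1.const_add r0
      simpa using this
    have hcover : AECover ((volume : Measure ℝ).restrict (Ioc r0 x)) atTop
        (fun n => Ioc (a n) x) := aecover_Ioc_of_Ioc hatend tendsto_const_nhds
    have htendint := hcover.integral_tendsto_of_countably_generated
      (f := deriv ψ) (hintOn x hx)
    refine le_of_tendsto htendint ?_
    filter_upwards with n
    have hrr : (∫ t in Ioc (a n) x, deriv ψ t ∂((volume : Measure ℝ).restrict (Ioc r0 x)))
        = ∫ t in Ioc (a n) x, deriv ψ t := by
      rw [Measure.restrict_restrict measurableSet_Ioc, inter_eq_left.2 ?_]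
      intro z hz
      exact ⟨(haD n).1.1.trans hz.1, hz.2⟩
    rw [hrr, (hFTC (haD n).1 hx (haD n).2).2]
    have := hψ.pos _ (haD n).1
    linarith
  -- E ∩ Ico r0 x ⊆ Ioc r0 x
  have hEsub' : ∀ {x : ℝ}, E ∩ Ico r0 x ⊆ Ioc r0 x := by
    rintro x z ⟨hzE, _, hz2⟩
    exact ⟨(hEsub hzE).1, hz2.le⟩
  -- Q is bounded between 0 and 1 on D
  have hQ01 : ∀ x ∈ D, 0 ≤ Q x ∧ Q x ≤ 1 := by
    intro x hx
    have hψx := hψ.pos x hx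
    constructor
    · apply div_nonneg _ hψx.le
      apply setIntegral_nonneg (hEmeas.inter measurableSet_Ico)
      intro z hz
      exact hderiv_nonneg z (hIoc_sub hx (hEsub' hz))
    · rw [div_le_one hψx]
      calc (∫ t in E ∩ Set.Ico r0 x, deriv ψ t) ≤ ∫ t in Ioc r0 x, deriv ψ t := by
            apply setIntegral_mono_set (hintOn x hx)
            · filter_upwards [ae_restrict_mem measurableSet_Ioc] with z hz
              exact hderiv_nonneg z (hIoc_sub hx hz)
            · exact HasSubset.Subset.eventuallyLE hEsub'
        _ ≤ ψ x := hbound x hx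
  have hQbdd : IsBoundedUnder (· ≤ ·) (densFilter R) Q :=
    ⟨1, eventually_map.2 (hDmem.mono fun x hx => (hQ01 x hx).2)⟩
  -- d is nonnegative, hence α > 1
  have hd0 : 0 ≤ d := by
    rw [hdQ]
    exact le_limsup_of_frequently_le
      ((hDmem.mono fun x hx => (hQ01 x hx).1).frequently) hQbdd
  have h1d : 0 < 1 - d := by linarith
  have hα1 : 1 < α := by
    have h2 : (1 - d) * (1 - d)⁻¹ = 1 := mul_inv_cancel₀ (ne_of_gt h1d)
    nlinarith
  have hα0 : 0 < α := by linarith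
  have hcd : d < 1 - 1 / α := by
    have h2 : α⁻¹ < ((1 - d)⁻¹)⁻¹ := by
      apply inv_strictAnti₀ (by positivity) hα
    rw [inv_inv] at h2
    rw [one_div]
    linarith
  -- main argument
  by_contra hcon
  push_neg at hcon
  have hfreq : ∃ᶠ x in densFilter R, 1 - 1 / α ≤ Q x := by
    rw [hbasis.frequently_iff]
    intro a ha
    have hmax : ((max a r0 : ℝ) : EReal) < R := by
      rcases max_cases a r0 with ⟨h1, _⟩ | ⟨h1, _⟩ <;> rw [h1]
      exacts [ha, hr0R]
    obtain ⟨r', hr'1, hr'2⟩ := exists_real_btwn hmax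
    have hr'D : r' ∈ D := ⟨lt_of_le_of_lt (le_max_right a r0) hr'1, hr'2⟩
    obtain ⟨r, hr'r, hrR, hfr⟩ := hcon r' hr'D
    have hrD : r ∈ D := ⟨hr'D.1.trans hr'r, hrR⟩
    have hψr := hψ.pos r hrD
    have hαψr : ψ r < α * ψ r := by nlinarith
    -- find u ∈ D with ψ u large
    obtain ⟨u, huD, huψ⟩ := (hDmem.and
      (hψ.unbounded.eventually (eventually_ge_atTop (α * ψ r + 1)))).frequently.exists
    have hru : r ≤ u := by
      by_contra hru
      push_neg at hru
      have := hmono huD hrD hru.le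
      linarith
    -- intermediate value: find s with ψ s = α * ψ r
    have hIVT := intermediate_value_Icc hru (hcont hrD huD)
    have hαmem : α * ψ r ∈ Icc (ψ r) (ψ u) := ⟨hαψr.le, by linarith⟩
    obtain ⟨s, hsIcc, hψs⟩ := hIVT hαmem
    have hsD : s ∈ D := hIcc hrD huD hsIcc
    -- identify invFunOn with s
    set s₀ := Function.invFunOn ψ D (α * ψ r) with hs₀
    have hex : ∃ y ∈ D, ψ y = α * ψ r := ⟨s, hsD, hψs⟩
    have hs₀D : s₀ ∈ D := Function.invFunOn_mem hex
    have hψs₀ : ψ s₀ = α * ψ r := Function.invFunOn_eq hex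
    have hrs₀ : r < s₀ := by
      by_contra hrs
      push_neg at hrs
      have := hmono hs₀D hrD hrs
      linarith
    -- the interval (r, s₀) is contained in E
    have hIooE : Ioo r s₀ ⊆ E := by
      intro t ht
      by_contra htE
      have htD : t ∈ D := hIcc hrD hs₀D ⟨ht.1.le, ht.2.le⟩
      have h1 : f r ≤ f t := hf hrD htD ht.1.le
      have h2 : f t ≤ g t := hfg t ⟨htD, htE⟩
      have h3 : g t ≤ g s₀ := hg htD hs₀D ht.2.le
      linarith
    refine ⟨s₀, ⟨?_, hs₀D.2⟩, ?_⟩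
    · calc a ≤ max a r0 := le_max_left a r0
        _ < r' := hr'1
        _ < r := hr'r
        _ < s₀ := hrs₀
    -- Q s₀ ≥ 1 - 1/α
    have hψs₀pos := hψ.pos s₀ hs₀D
    rw [hQ]
    rw [le_div_iff₀ hψs₀pos]
    have hkey : (∫ t in Ioo r s₀, deriv ψ t) ≤ ∫ t in E ∩ Set.Ico r0 s₀, deriv ψ t := by
      apply setIntegral_mono_set
      · exact (hintOn s₀ hs₀D).mono_set hEsub'
      · filter_upwards [ae_restrict_mem (hEmeas.inter measurableSet_Ico)] with z hz
        exact hderiv_nonneg z (hIoc_sub hs₀D (hEsub' hz))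
      · apply HasSubset.Subset.eventuallyLE
        intro z hz
        exact ⟨hIooE hz, (hrD.1.trans hz.1).le, hz.2⟩
    have hIooval : (∫ t in Ioo r s₀, deriv ψ t) = ψ s₀ - ψ r := by
      rw [← integral_Ioc_eq_integral_Ioo]
      exact (hFTC hrD hs₀D hrs₀.le).2
    have : (1 - 1 / α) * ψ s₀ = ψ s₀ - ψ r := by
      rw [hψs₀]
      field_simp
    rw [this, ← hIooval]
    exact hkey
  have := le_limsup_of_frequently_le hfreq hQbdd
  rw [← hdQ] at this
  linarith
end

section
/- Let T : [1,∞) → (0,∞) be a non-decreasing function of order ρ ∈ (0,∞) and of type τ ∈ (0,∞), and let ε0 ∈ (0,τ). Then the set N1 = {r ≥ 1 : (τ−ε0) r^ρ ≤ T(r) ≤ (τ+ε0) r^ρ} has upper linear density at least 1 − ((τ−ε0)/τ)^{1/ρ}. -/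
open MeasureTheory Filter Set

/-- The order of growth `ρ̄(T) = limsup_{r→∞} log T(r) / log r` (as an extended real). -/
noncomputable def growthOrder (T : ℝ → ℝ) : EReal :=
  Filter.limsup (fun r => ((Real.log (T r) / Real.log r : ℝ) : EReal)) Filter.atTop

/-- The lower order of growth `ρ_(T) = liminf_{r→∞} log T(r) / log r` (as an extended real). -/
noncomputable def lowerGrowthOrder (T : ℝ → ℝ) : EReal :=
  Filter.liminf (fun r => ((Real.log (T r) / Real.log r : ℝ) : EReal)) Filter.atTop

/-- The type of `T` with respect to the order `ρ`: `τ(T) = limsup_{r→∞} T(r)/r^ρ`. -/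
noncomputable def growthTypeOf (T : ℝ → ℝ) (ρ : ℝ) : EReal :=
  Filter.limsup (fun r => ((T r / r ^ ρ : ℝ) : EReal)) Filter.atTop

/-- The upper logarithmic density of `D ⊆ [1,∞)`:
`limsup_{r→∞} (1/log r) ∫_{D∩[1,r]} dt/t`. -/
noncomputable def upperLogDens (D : Set ℝ) : ℝ :=
  Filter.limsup (fun r => (∫ t in D ∩ Set.Icc 1 r, 1 / t) / Real.log r) Filter.atTop

/-- The lower logarithmic density of `D ⊆ [1,∞)`. -/
noncomputable def lowerLogDens (D : Set ℝ) : ℝ :=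
  Filter.liminf (fun r => (∫ t in D ∩ Set.Icc 1 r, 1 / t) / Real.log r) Filter.atTop

/-- The upper linear density of `D ⊆ [1,∞)`: `limsup_{r→∞} (1/r) ∫_{D∩[1,r]} dt`. -/
noncomputable def upperLinDens (D : Set ℝ) : ℝ :=
  Filter.limsup (fun r => (∫ t in D ∩ Set.Icc 1 r, (1 : ℝ)) / r) Filter.atTop

theorem statement12 (T : ℝ → ℝ) (hpos : ∀ r, 1 ≤ r → 0 < T r)
    (hmono : MonotoneOn T (Set.Ici 1))
    (ρ τ : ℝ) (hρ : 0 < ρ) (hτ : 0 < τ)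
    (hord : growthOrder T = (ρ : EReal)) (htyp : growthTypeOf T ρ = (τ : EReal))
    (ε0 : ℝ) (hε0 : 0 < ε0) (hε0τ : ε0 < τ) :
    1 - ((τ - ε0) / τ) ^ (1 / ρ) ≤
      upperLinDens {r | 1 ≤ r ∧ (τ - ε0) * r ^ ρ ≤ T r ∧ T r ≤ (τ + ε0) * r ^ ρ} := by
  have hτε : 0 < τ - ε0 := by linarith
  set N : Set ℝ := {r | 1 ≤ r ∧ (τ - ε0) * r ^ ρ ≤ T r ∧ T r ≤ (τ + ε0) * r ^ ρ} with hNdef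
  set g : ℝ → ℝ := fun r => (∫ t in N ∩ Set.Icc 1 r, (1 : ℝ)) / r with hgdef
  have hgvol : ∀ r : ℝ, g r = (volume (N ∩ Set.Icc 1 r)).toReal / r := by
    intro r
    simp [hgdef, MeasureTheory.setIntegral_const]
    rfl
  have hgbdd : ∀ r : ℝ, 1 ≤ r → g r ≤ 1 := by
    intro r hr
    rw [hgvol, div_le_one (by linarith)]
    calc (volume (N ∩ Set.Icc 1 r)).toReal
        ≤ (volume (Set.Icc 1 r)).toReal :=
          ENNReal.toReal_mono (by simp [Real.volume_Icc]) (measure_mono inter_subset_right)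
      _ = r - 1 := by rw [Real.volume_Icc, ENNReal.toReal_ofReal (by linarith)]
      _ ≤ r := by linarith
  have hbdd : Filter.IsBoundedUnder (· ≤ ·) Filter.atTop g :=
    Filter.isBoundedUnder_of_eventually_le (Filter.eventually_atTop.2 ⟨1, hgbdd⟩)
  unfold growthTypeOf at htyp
  have hup : ∀ᶠ r in Filter.atTop, T r < (τ + ε0) * r ^ ρ ∧ 1 ≤ r := by
    have h1 : ∀ᶠ r in Filter.atTop, ((T r / r ^ ρ : ℝ) : EReal) < ((τ + ε0 : ℝ) : EReal) := by
      refine Filter.eventually_lt_of_limsup_lt ?_ Filter.isBounded_le_of_top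
      rw [htyp]
      exact_mod_cast (by linarith : τ < τ + ε0)
    filter_upwards [h1, Filter.eventually_ge_atTop (1 : ℝ)] with r h hr
    refine ⟨?_, hr⟩
    have hrp : 0 < r ^ ρ := Real.rpow_pos_of_pos (by linarith) ρ
    have hlt : T r / r ^ ρ < τ + ε0 := EReal.coe_lt_coe_iff.1 h
    calc T r = (T r / r ^ ρ) * r ^ ρ := by field_simp
      _ < (τ + ε0) * r ^ ρ := mul_lt_mul_of_pos_right hlt hrp
  obtain ⟨R0, hR0⟩ := Filter.eventually_atTop.1 hup
  have key : ∀ δ : ℝ, 0 < δ → δ < ε0 →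
      1 - ((τ - ε0) / (τ - δ)) ^ (1 / ρ) ≤ upperLinDens N := by
    intro δ hδ hδε
    have hτδ : 0 < τ - δ := by linarith
    set k : ℝ := ((τ - δ) / (τ - ε0)) ^ (1 / ρ) with hk
    have hb : 1 < (τ - δ) / (τ - ε0) := (one_lt_div hτε).2 (by linarith)
    have hk1 : 1 < k := by
      calc (1 : ℝ) = 1 ^ (1 / ρ) := (Real.one_rpow _).symm
        _ < k := Real.rpow_lt_rpow (by norm_num) hb (by positivity)
    have hkρ : k ^ ρ = (τ - δ) / (τ - ε0) := by
      rw [hk, ← Real.rpow_mul (by positivity), one_div, inv_mul_cancel₀ (ne_of_gt hρ),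
        Real.rpow_one]
    have hkne : k ≠ 0 := by positivity
    have hinv : ((τ - ε0) / (τ - δ)) ^ (1 / ρ) = k⁻¹ := by
      rw [hk, ← Real.inv_rpow (by positivity), inv_div]
    have hfreq : ∃ᶠ r in Filter.atTop, ((τ - δ : ℝ) : EReal) < ((T r / r ^ ρ : ℝ) : EReal) := by
      refine Filter.frequently_lt_of_lt_limsup Filter.isCobounded_le_of_bot ?_
      rw [htyp]
      exact_mod_cast (by linarith : τ - δ < τ)
    have hfle : ∃ᶠ r in Filter.atTop, 1 - ((τ - ε0) / (τ - δ)) ^ (1 / ρ) ≤ g r := by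
      rw [Filter.frequently_atTop]
      intro M
      obtain ⟨s, hs, hsT⟩ := Filter.frequently_atTop.1 hfreq (max (max M R0) 1)
      have hs1 : 1 ≤ s := le_trans (le_max_right _ _) hs
      have hsR0 : R0 ≤ s := le_trans (le_trans (le_max_right _ _) (le_max_left _ _)) hs
      have hsM : M ≤ s := le_trans (le_trans (le_max_left _ _) (le_max_left _ _)) hs
      have hspos : 0 < s := by linarith
      have hspow : 0 < s ^ ρ := Real.rpow_pos_of_pos hspos ρ
      have hTs : (τ - δ) * s ^ ρ ≤ T s := by
        have h := EReal.coe_lt_coe_iff.1 hsT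
        rw [lt_div_iff₀ hspow] at h
        linarith
      set R := k * s with hRdef
      have hsR : s ≤ R := by nlinarith
      have hRpos : 0 < R := lt_of_lt_of_le hspos hsR
      refine ⟨R, le_trans hsM hsR, ?_⟩
      have hsub : Set.Icc s R ⊆ N ∩ Set.Icc 1 R := by
        rintro r ⟨hrs, hrR⟩
        have hr1 : 1 ≤ r := le_trans hs1 hrs
        refine ⟨⟨hr1, ?_, ?_⟩, hr1, hrR⟩
        · calc (τ - ε0) * r ^ ρ ≤ (τ - ε0) * R ^ ρ := by
                apply mul_le_mul_of_nonneg_left _ (le_of_lt hτε)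
                exact Real.rpow_le_rpow (by linarith) hrR (le_of_lt hρ)
            _ = (τ - δ) * s ^ ρ := by
                rw [hRdef, Real.mul_rpow (by linarith) (by linarith), hkρ]
                field_simp
            _ ≤ T s := hTs
            _ ≤ T r := hmono (Set.mem_Ici.2 hs1) (Set.mem_Ici.2 hr1) hrs
        · exact le_of_lt (hR0 r (le_trans hsR0 hrs)).1
      have h3 : volume (N ∩ Set.Icc 1 R) ≠ ⊤ :=
        (lt_of_le_of_lt (measure_mono inter_subset_right)
          (by simp [Real.volume_Icc] : volume (Set.Icc 1 R) < ⊤)).ne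
      have hvol : R - s ≤ (volume (N ∩ Set.Icc 1 R)).toReal := by
        have h1 : ENNReal.ofReal (R - s) ≤ volume (N ∩ Set.Icc 1 R) := by
          rw [← Real.volume_Icc]
          exact measure_mono hsub
        calc R - s = (ENNReal.ofReal (R - s)).toReal :=
              (ENNReal.toReal_ofReal (by linarith)).symm
          _ ≤ _ := ENNReal.toReal_mono h3 h1
      rw [hgvol, le_div_iff₀ hRpos]
      have heq : (1 - ((τ - ε0) / (τ - δ)) ^ (1 / ρ)) * R = R - s := by
        rw [hinv, hRdef]
        field_simp
      rw [heq]
      exact hvol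
    exact Filter.le_limsup_of_frequently_le hfle hbdd
  have hcont : Filter.Tendsto (fun δ : ℝ => 1 - ((τ - ε0) / (τ - δ)) ^ (1 / ρ))
      (nhdsWithin 0 (Set.Ioi 0)) (nhds (1 - ((τ - ε0) / τ) ^ (1 / ρ))) := by
    have h1 : Filter.Tendsto (fun δ : ℝ => (τ - ε0) / (τ - δ)) (nhdsWithin 0 (Set.Ioi 0))
        (nhds ((τ - ε0) / τ)) := by
      apply Filter.Tendsto.mono_left _ nhdsWithin_le_nhds
      have hc : ContinuousAt (fun δ : ℝ => (τ - ε0) / (τ - δ)) 0 := by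
        apply ContinuousAt.div continuousAt_const (by fun_prop)
        simpa using hτ.ne'
      simpa using hc.tendsto
    have h2 : ContinuousAt (fun x : ℝ => x ^ (1 / ρ)) ((τ - ε0) / τ) :=
      Real.continuousAt_rpow_const _ _ (Or.inl (by positivity))
    exact tendsto_const_nhds.sub (h2.tendsto.comp h1)
  refine le_of_tendsto hcont ?_
  filter_upwards [Ioo_mem_nhdsGT_of_mem (Set.left_mem_Ico.2 hε0)] with δ hδ
  exact key δ hδ.1 hδ.2
end

section
/- Let T1, T2 : [1,∞) → (0,∞) be non-decreasing unbounded functions whose orders satisfy 0 ≤ ρ̄(T1) < ρ̄(T2) < ∞, and let φ : [1,∞) → (0,∞) be a non-decreasing function such that log φ(r) = o(log r) as r → ∞. Then the set P = {r ≥ 1 : φ(r)·T1(r) < T2(r)} has upper logarithmic density at least 1 − ρ̄(T1)/ρ̄(T2) and upper linear density equal to 1. -/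
open MeasureTheory Filter Set Topology

/-- Integral of `1/t` over `Ico a b`. -/
lemma integral_Ico_one_div_aux (a b : ℝ) (h : 1 ≤ a) (hab : a ≤ b) :
    ∫ t in Set.Ico a b, 1 / t = Real.log b - Real.log a := by
  rw [MeasureTheory.integral_Ico_eq_integral_Ioo, ← MeasureTheory.integral_Ioc_eq_integral_Ioo,
    ← intervalIntegral.integral_of_le hab,
    integral_one_div (by
      intro h0; rw [Set.uIcc_of_le hab] at h0; linarith [h0.1]),
    Real.log_div (by linarith) (by linarith)]

/-- Integral of `1/t` over `Icc 1 b`. -/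
lemma integral_Icc_one_div_aux (b : ℝ) (hb : 1 ≤ b) :
    ∫ t in Set.Icc 1 b, 1 / t = Real.log b := by
  rw [MeasureTheory.integral_Icc_eq_integral_Ioo, ← MeasureTheory.integral_Ioc_eq_integral_Ioo,
    ← intervalIntegral.integral_of_le hb,
    integral_one_div (by
      intro h0; rw [Set.uIcc_of_le hb] at h0; linarith [h0.1])]
  simp

lemma eventually_lt_of_growth (u : ℝ → ℝ) (ρ c : ℝ)
    (h : Filter.limsup (fun r => ((u r : ℝ) : EReal)) Filter.atTop = (ρ : EReal))
    (hc : ρ < c) : ∀ᶠ r in atTop, u r < c := by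
  have := Filter.eventually_lt_of_limsup_lt (f := atTop)
    (u := fun r => ((u r : ℝ) : EReal)) (b := (c : EReal)) (by rw [h]; exact_mod_cast hc)
  exact this.mono fun r hr => by simpa using (EReal.coe_lt_coe_iff.1 hr)

lemma frequently_gt_of_growth (u : ℝ → ℝ) (ρ c : ℝ)
    (h : Filter.limsup (fun r => ((u r : ℝ) : EReal)) Filter.atTop = (ρ : EReal))
    (hc : c < ρ) : ∃ᶠ r in atTop, c < u r := by
  have := Filter.frequently_lt_of_lt_limsup (f := atTop)
    (u := fun r => ((u r : ℝ) : EReal)) (b := (c : EReal)) (by isBoundedDefault)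
    (by rw [h]; exact_mod_cast hc)
  exact this.mono fun r hr => by simpa using (EReal.coe_lt_coe_iff.1 hr)

theorem statement13 (T1 T2 : ℝ → ℝ)
    (hpos1 : ∀ r, 1 ≤ r → 0 < T1 r) (hpos2 : ∀ r, 1 ≤ r → 0 < T2 r)
    (hmono1 : MonotoneOn T1 (Set.Ici 1)) (hmono2 : MonotoneOn T2 (Set.Ici 1))
    (hunb1 : ∀ M : ℝ, ∃ r, 1 ≤ r ∧ M < T1 r) (hunb2 : ∀ M : ℝ, ∃ r, 1 ≤ r ∧ M < T2 r)
    (ρ1 ρ2 : ℝ) (h1 : growthOrder T1 = (ρ1 : EReal)) (h2 : growthOrder T2 = (ρ2 : EReal))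
    (hρ10 : 0 ≤ ρ1) (hρ12 : ρ1 < ρ2)
    (φ : ℝ → ℝ) (hφpos : ∀ r, 1 ≤ r → 0 < φ r) (hφmono : MonotoneOn φ (Set.Ici 1))
    (hφo : (fun r => Real.log (φ r)) =o[Filter.atTop] Real.log) :
    1 - ρ1 / ρ2 ≤ upperLogDens {r | 1 ≤ r ∧ φ r * T1 r < T2 r} ∧
    upperLinDens {r | 1 ≤ r ∧ φ r * T1 r < T2 r} = 1 := by
  set P : Set ℝ := {r | 1 ≤ r ∧ φ r * T1 r < T2 r} with hP
  -- measurability of P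
  have hg : Monotone (fun r : ℝ => φ (max r 1) * T1 (max r 1)) := by
    intro x y hxy
    have hx : (1:ℝ) ≤ max x 1 := le_max_right _ _
    have hy : (1:ℝ) ≤ max y 1 := le_max_right _ _
    have hm : max x 1 ≤ max y 1 := max_le_max hxy le_rfl
    exact mul_le_mul (hφmono hx hy hm) (hmono1 hx hy hm) (hpos1 _ hx).le (hφpos _ hy).le
  have hh : Monotone (fun r : ℝ => T2 (max r 1)) := fun x y hxy =>
    hmono2 (mem_Ici.2 (le_max_right _ _)) (mem_Ici.2 (le_max_right _ _)) (max_le_max hxy le_rfl)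
  have hPmeas : MeasurableSet P := by
    have hPeq : P = {r : ℝ | 1 ≤ r} ∩
        {r : ℝ | φ (max r 1) * T1 (max r 1) < T2 (max r 1)} := by
      ext r
      simp only [hP, mem_inter_iff, mem_setOf_eq]
      constructor
      · rintro ⟨h1r, h2r⟩; exact ⟨h1r, by rwa [max_eq_left h1r]⟩
      · rintro ⟨h1r, h2r⟩; exact ⟨h1r, by rwa [max_eq_left h1r] at h2r⟩
    rw [hPeq]
    exact measurableSet_Ici.inter (measurableSet_lt hg.measurable hh.measurable)
  -- asymptotic bounds
  have hT1b : ∀ ε : ℝ, 0 < ε → ∀ᶠ r in atTop, T1 r < r ^ (ρ1 + ε) := by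
    intro ε hε
    filter_upwards [eventually_lt_of_growth _ ρ1 (ρ1 + ε) h1 (by linarith),
      eventually_ge_atTop (2:ℝ)] with r hr h2r
    have hlr : 0 < Real.log r := Real.log_pos (by linarith)
    have h1r : (1:ℝ) ≤ r := by linarith
    have hlt : Real.log (T1 r) < (ρ1 + ε) * Real.log r := (div_lt_iff₀ hlr).1 hr
    calc T1 r = Real.exp (Real.log (T1 r)) := (Real.exp_log (hpos1 r h1r)).symm
      _ < Real.exp ((ρ1 + ε) * Real.log r) := Real.exp_lt_exp.2 hlt
      _ = r ^ (ρ1 + ε) := by rw [Real.rpow_def_of_pos (by linarith), mul_comm]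
  have hφb : ∀ ε : ℝ, 0 < ε → ∀ᶠ r in atTop, φ r ≤ r ^ ε := by
    intro ε hε
    filter_upwards [hφo.def hε, eventually_ge_atTop (2:ℝ)] with r hr h2r
    have hlr : 0 < Real.log r := Real.log_pos (by linarith)
    have h1r : (1:ℝ) ≤ r := by linarith
    have : Real.log (φ r) ≤ ε * Real.log r := by
      calc Real.log (φ r) ≤ ‖Real.log (φ r)‖ := Real.le_norm_self _
        _ ≤ ε * ‖Real.log r‖ := hr
        _ = ε * Real.log r := by rw [Real.norm_eq_abs, abs_of_pos hlr]
    calc φ r = Real.exp (Real.log (φ r)) := (Real.exp_log (hφpos r h1r)).symm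
      _ ≤ Real.exp (ε * Real.log r) := Real.exp_le_exp.2 this
      _ = r ^ ε := by rw [Real.rpow_def_of_pos (by linarith), mul_comm]
  have hT2b : ∀ ε : ℝ, 0 < ε → ∃ᶠ r in atTop, r ^ (ρ2 - ε) < T2 r := by
    intro ε hε
    have hfreq := frequently_gt_of_growth _ ρ2 (ρ2 - ε) h2 (by linarith)
    refine (hfreq.and_eventually (eventually_ge_atTop (2:ℝ))).mono ?_
    rintro r ⟨hr, h2r⟩
    have hlr : 0 < Real.log r := Real.log_pos (by linarith)
    have h1r : (1:ℝ) ≤ r := by linarith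
    have hlt : (ρ2 - ε) * Real.log r < Real.log (T2 r) := (lt_div_iff₀ hlr).1 hr
    calc r ^ (ρ2 - ε) = Real.exp ((ρ2 - ε) * Real.log r) := by
          rw [Real.rpow_def_of_pos (by linarith), mul_comm]
      _ < Real.exp (Real.log (T2 r)) := Real.exp_lt_exp.2 hlt
      _ = T2 r := Real.exp_log (hpos2 r h1r)
  -- the key interval lemma
  have main : ∀ ε : ℝ, 0 < ε → ρ1 + 2*ε < ρ2 - ε →
      ∀ R : ℝ, ∃ r : ℝ, 2 ≤ r ∧ R ≤ r ∧
        ∀ s, r ≤ s → s < r ^ ((ρ2 - ε) / (ρ1 + 2*ε)) → s ∈ P := by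
    intro ε hε hlt R
    have ha : 0 < ρ1 + 2*ε := by linarith
    obtain ⟨R0, hR0⟩ := eventually_atTop.1 ((hT1b ε hε).and (hφb ε hε))
    obtain ⟨r, hrge, hrT2⟩ := (frequently_atTop.1 (hT2b ε hε)) (max (max R R0) 2)
    have h2r : 2 ≤ r := le_trans (le_max_right _ _) hrge
    have hRr : R ≤ r := le_trans (le_trans (le_max_left R R0) (le_max_left _ _)) hrge
    have hR0r : R0 ≤ r := le_trans (le_trans (le_max_right R R0) (le_max_left _ _)) hrge
    refine ⟨r, h2r, hRr, ?_⟩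
    intro s hs hs'
    obtain ⟨hsT1, hsφ⟩ := hR0 s (le_trans hR0r hs)
    have h0s : 0 < s := by linarith
    have h1s : (1:ℝ) ≤ s := by linarith
    refine ⟨h1s, ?_⟩
    have e1 : φ s * T1 s < s ^ ε * s ^ (ρ1 + ε) :=
      mul_lt_mul' hsφ hsT1 (hpos1 s h1s).le (Real.rpow_pos_of_pos h0s ε)
    have e2 : s ^ ε * s ^ (ρ1 + ε) = s ^ (ρ1 + 2*ε) := by
      rw [← Real.rpow_add h0s]; ring_nf
    have e3 : s ^ (ρ1 + 2*ε) < r ^ (ρ2 - ε) := by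
      have h' : s ^ (ρ1 + 2*ε) < (r ^ ((ρ2 - ε) / (ρ1 + 2*ε))) ^ (ρ1 + 2*ε) :=
        Real.rpow_lt_rpow h0s.le hs' ha
      rwa [← Real.rpow_mul (by linarith : (0:ℝ) ≤ r),
        div_mul_cancel₀ _ ha.ne'] at h'
    have e5 : T2 r ≤ T2 s := hmono2 (by simp; linarith) (by simp; linarith) hs
    linarith
  -- general integrability facts
  have hIcc_int : ∀ y : ℝ, 1 ≤ y → IntegrableOn (fun t => 1 / t) (Icc 1 y) := by
    intro y hy
    apply ContinuousOn.integrableOn_Icc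
    apply ContinuousOn.div continuousOn_const continuousOn_id
    intro t ht
    simp only [id]
    linarith [ht.1]
  have hPint : ∀ y : ℝ, 1 ≤ y → IntegrableOn (fun t => 1 / t) (P ∩ Icc 1 y) := fun y hy =>
    (hIcc_int y hy).mono_set inter_subset_right
  have hnnP : ∀ y : ℝ, 0 ≤ᵐ[volume.restrict (P ∩ Icc 1 y)] (fun t => 1 / t) := by
    intro y
    refine (ae_restrict_iff' (hPmeas.inter measurableSet_Icc)).2 (Eventually.of_forall ?_)
    intro t ht
    have : (1:ℝ) ≤ t := ht.2.1
    positivity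
  have hnnIcc : ∀ y : ℝ, 0 ≤ᵐ[volume.restrict (Icc 1 y)] (fun t => 1 / t) := by
    intro y
    refine (ae_restrict_iff' measurableSet_Icc).2 (Eventually.of_forall ?_)
    intro t ht
    have : (1:ℝ) ≤ t := ht.1
    positivity
  have hconst_int : ∀ y : ℝ, IntegrableOn (fun _ : ℝ => (1:ℝ)) (P ∩ Icc 1 y) := by
    intro y
    refine integrableOn_const (ne_of_lt ?_)
    exact lt_of_le_of_lt (measure_mono inter_subset_right) measure_Icc_lt_top
  -- upper bounds on the density quotients
  have hGle : ∀ᶠ y in atTop, (∫ t in P ∩ Icc 1 y, 1 / t) / Real.log y ≤ 1 := by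
    filter_upwards [eventually_ge_atTop (2:ℝ)] with y h2y
    have h1y : (1:ℝ) ≤ y := by linarith
    have hly : 0 < Real.log y := Real.log_pos (by linarith)
    rw [div_le_one hly]
    calc (∫ t in P ∩ Icc 1 y, 1 / t) ≤ ∫ t in Icc 1 y, 1 / t :=
          setIntegral_mono_set (hIcc_int y h1y) (hnnIcc y)
            (HasSubset.Subset.eventuallyLE inter_subset_right)
      _ = Real.log y := integral_Icc_one_div_aux y h1y
  have hG0 : ∀ᶠ y in atTop, (0:ℝ) ≤ (∫ t in P ∩ Icc 1 y, 1 / t) / Real.log y := by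
    filter_upwards [eventually_ge_atTop (2:ℝ)] with y h2y
    have hly : 0 < Real.log y := Real.log_pos (by linarith)
    exact div_nonneg (setIntegral_nonneg_of_ae_restrict (hnnP y)) hly.le
  have hFle : ∀ᶠ y in atTop, (∫ t in P ∩ Icc 1 y, (1:ℝ)) / y ≤ 1 := by
    filter_upwards [eventually_ge_atTop (1:ℝ)] with y h1y
    have h0y : (0:ℝ) < y := by linarith
    rw [div_le_one h0y, setIntegral_const, smul_eq_mul, mul_one]
    calc (volume (P ∩ Icc 1 y)).toReal ≤ (volume (Icc 1 y)).toReal :=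
          ENNReal.toReal_mono measure_Icc_lt_top.ne (measure_mono inter_subset_right)
      _ = y - 1 := by rw [Real.volume_Icc, ENNReal.toReal_ofReal (by linarith)]
      _ ≤ y := by linarith
  have hF0 : ∀ᶠ y in atTop, (0:ℝ) ≤ (∫ t in P ∩ Icc 1 y, (1:ℝ)) / y := by
    filter_upwards [eventually_ge_atTop (1:ℝ)] with y h1y
    have h0y : (0:ℝ) < y := by linarith
    rw [setIntegral_const, smul_eq_mul, mul_one]
    positivity
  constructor
  · -- logarithmic density
    have hεbound : ∀ ε : ℝ, 0 < ε → ρ1 + 2*ε < ρ2 - ε →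
        1 - (ρ1 + 2*ε) / (ρ2 - ε) ≤ upperLogDens P := by
      intro ε hε hlt
      set a := ρ1 + 2*ε with hadef
      set b := ρ2 - ε with hbdef
      have ha : 0 < a := by simp only [hadef]; linarith
      have hb : 0 < b := by simp only [hbdef]; linarith
      have hk1 : 1 < b / a := (one_lt_div ha).2 hlt
      have hfreq : ∃ᶠ y in atTop, 1 - a / b ≤ (∫ t in P ∩ Icc 1 y, 1 / t) / Real.log y := by
        rw [frequently_atTop]
        intro R
        obtain ⟨r, h2r, hRr, hr⟩ := main ε hε hlt R
        set k := b / a with hkdef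
        set y := r ^ k with hydef
        have h0r : (0:ℝ) < r := by linarith
        have h1r : (1:ℝ) ≤ r := by linarith
        have hry : r ≤ y := by
          calc r = r ^ (1:ℝ) := (Real.rpow_one r).symm
            _ ≤ r ^ k := Real.rpow_le_rpow_of_exponent_le h1r hk1.le
        have h1y : (1:ℝ) ≤ y := le_trans h1r hry
        have hly : 0 < Real.log y := Real.log_pos (by linarith)
        have hlr : 0 < Real.log r := Real.log_pos (by linarith)
        refine ⟨y, le_trans hRr hry, ?_⟩
        have hsub2 : Ico r y ⊆ P ∩ Icc 1 y := by
          rintro s ⟨hs1, hs2⟩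
          exact ⟨hr s hs1 hs2, ⟨by linarith, hs2.le⟩⟩
        have hlow : Real.log y - Real.log r ≤ ∫ t in P ∩ Icc 1 y, 1 / t := by
          rw [← integral_Ico_one_div_aux r y h1r hry]
          exact setIntegral_mono_set (hPint y h1y) (hnnP y)
            (HasSubset.Subset.eventuallyLE hsub2)
        have hlogy : Real.log y = k * Real.log r := Real.log_rpow h0r k
        rw [le_div_iff₀ hly]
        have hkey : (1 - a / b) * Real.log y = Real.log y - Real.log r := by
          rw [hlogy, hkdef]
          field_simp
        linarith [hlow, hkey]
      exact le_limsup_of_frequently_le hfreq ⟨1, eventually_map.2 hGle⟩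
    have hρ2 : 0 < ρ2 := lt_of_le_of_lt hρ10 hρ12
    have hcont : ContinuousAt (fun ε : ℝ => 1 - (ρ1 + 2*ε) / (ρ2 - ε)) 0 := by
      apply ContinuousAt.sub continuousAt_const
      apply ContinuousAt.div (by fun_prop) (by fun_prop)
      simpa using hρ2.ne'
    have ht : Tendsto (fun ε : ℝ => 1 - (ρ1 + 2*ε) / (ρ2 - ε)) (nhdsWithin 0 (Ioi 0))
        (nhds (1 - ρ1 / ρ2)) := by
      have := hcont.tendsto
      simp only [mul_zero, add_zero, sub_zero] at this
      exact this.mono_left nhdsWithin_le_nhds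
    refine le_of_tendsto ht ?_
    filter_upwards [self_mem_nhdsWithin,
      Ioo_mem_nhdsGT_of_mem (α := ℝ) (show (0:ℝ) ∈ Ico 0 ((ρ2 - ρ1)/3) from ⟨le_rfl, by linarith⟩)]
      with ε hε1 hε2
    exact hεbound ε hε1 (by rcases hε2 with ⟨_, h⟩; linarith)
  · -- linear density
    refine le_antisymm (limsup_le_of_le (isCoboundedUnder_le_of_eventually_le _ hF0) hFle) ?_
    apply le_of_forall_lt
    intro c hc
    obtain ⟨c', hc1, hc2⟩ := exists_between hc
    refine lt_of_lt_of_le hc1 ?_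
    -- show c' ≤ upperLinDens P for c' < 1
    set ε := (ρ2 - ρ1)/4 with hεdef
    have hε : 0 < ε := by simp only [hεdef]; linarith
    have hlt : ρ1 + 2*ε < ρ2 - ε := by simp only [hεdef]; linarith
    set a := ρ1 + 2*ε with hadef
    set b := ρ2 - ε with hbdef
    have ha : 0 < a := by simp only [hadef]; linarith
    have hk1 : 1 < b / a := (one_lt_div ha).2 hlt
    set k := b / a with hkdef
    have htend : Tendsto (fun r : ℝ => r ^ (1 - k)) atTop (𝓝 0) := by
      have := tendsto_rpow_neg_atTop (y := k - 1) (by linarith)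
      simpa [neg_sub] using this
    have hev : ∀ᶠ r in atTop, r ^ (1 - k) < 1 - c' :=
      htend.eventually (gt_mem_nhds (by linarith : (0:ℝ) < 1 - c'))
    obtain ⟨R1, hR1⟩ := eventually_atTop.1 hev
    have hfreq : ∃ᶠ y in atTop, c' ≤ (∫ t in P ∩ Icc 1 y, (1:ℝ)) / y := by
      rw [frequently_atTop]
      intro R
      obtain ⟨r, h2r, hRr, hr⟩ := main ε hε hlt (max R R1)
      set y := r ^ k with hydef
      have h0r : (0:ℝ) < r := by linarith
      have h1r : (1:ℝ) ≤ r := by linarith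
      have hry : r ≤ y := by
        calc r = r ^ (1:ℝ) := (Real.rpow_one r).symm
          _ ≤ r ^ k := Real.rpow_le_rpow_of_exponent_le h1r hk1.le
      have h1y : (1:ℝ) ≤ y := le_trans h1r hry
      have h0y : (0:ℝ) < y := by linarith
      refine ⟨y, le_trans (le_trans (le_max_left R R1) hRr) hry, ?_⟩
      have hsub2 : Ico r y ⊆ P ∩ Icc 1 y := by
        rintro s ⟨hs1, hs2⟩
        exact ⟨hr s hs1 hs2, ⟨by linarith, hs2.le⟩⟩
      have hlow : y - r ≤ ∫ t in P ∩ Icc 1 y, (1:ℝ) := by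
        have : ∫ t in Ico r y, (1:ℝ) = y - r := by
          rw [setIntegral_const, smul_eq_mul, mul_one, measureReal_def, Real.volume_Ico,
            ENNReal.toReal_ofReal (by linarith)]
        rw [← this]
        exact setIntegral_mono_set (hconst_int y) (Eventually.of_forall fun t => zero_le_one)
          (HasSubset.Subset.eventuallyLE hsub2)
      have hr1k : r / y = r ^ (1 - k) := by
        rw [hydef, Real.rpow_sub h0r, Real.rpow_one]
      have hrR1 : r ^ (1 - k) < 1 - c' := hR1 r (le_trans (le_max_right R R1) hRr)
      have hstep : c' ≤ (y - r) / y := by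
        rw [sub_div, div_self h0y.ne', hr1k]
        linarith
      calc c' ≤ (y - r) / y := hstep
        _ ≤ (∫ t in P ∩ Icc 1 y, (1:ℝ)) / y := by
            gcongr
    exact le_limsup_of_frequently_le hfreq ⟨1, eventually_map.2 hFle⟩
end

section
/- Let T1, T2 : [1,∞) → (0,∞) be non-decreasing unbounded functions whose lower orders satisfy 0 ≤ ρ_(T1) < ρ_(T2) < ∞, and let φ : [1,∞) → (0,∞) be a non-decreasing function such that log φ(r) = o(log r) as r → ∞. Then the set P = {r ≥ 1 : φ(r)·T1(r) < T2(r)} has upper logarithmic density at least 1 − ρ_(T1)/ρ_(T2) and upper linear density equal to 1. -/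
open MeasureTheory Filter Set

private lemma myIntegral (a b : ℝ) (ha : 0 < a) (hab : a ≤ b) :
    ∫ t in Icc a b, 1/t = Real.log b - Real.log a := by
  rw [MeasureTheory.integral_Icc_eq_integral_Ioc, ← intervalIntegral.integral_of_le hab,
    integral_one_div (by intro h; simp [Set.mem_uIcc] at h; rcases h with ⟨h,_⟩|⟨_,h⟩ <;> linarith)]
  rw [Real.log_div (by linarith) (by linarith)]

private lemma myIntegrable (a b : ℝ) (ha : 0 < a) :
    IntegrableOn (fun t : ℝ => 1/t) (Icc a b) := by
  apply ContinuousOn.integrableOn_compact isCompact_Icc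
  exact ContinuousOn.div continuousOn_const continuousOn_id
    (fun x hx => ne_of_gt (lt_of_lt_of_le ha hx.1))

private lemma int_le (a b : ℝ) (ha : 0 < a) (hab : a ≤ b) (s : Set ℝ) (hs : s ⊆ Icc a b) :
    ∫ t in s, 1/t ≤ Real.log b - Real.log a := by
  rw [← myIntegral a b ha hab]
  apply MeasureTheory.setIntegral_mono_set (myIntegrable a b ha)
  · filter_upwards [ae_restrict_mem measurableSet_Icc] with t ht
    have : 0 < t := lt_of_lt_of_le ha ht.1
    positivity
  · exact HasSubset.Subset.eventuallyLE hs

private lemma freq_lt (g : ℝ → ℝ) (c : ℝ)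
    (h : Filter.liminf (fun r => ((g r : ℝ) : EReal)) atTop = (c : EReal)) (b : ℝ) (hb : c < b) :
    ∃ᶠ r in atTop, g r < b := by
  have := Filter.frequently_lt_of_liminf_lt (b := (b : EReal)) (u := fun r => ((g r : ℝ) : EReal))
    (by isBoundedDefault) (by rw [h]; exact_mod_cast hb)
  exact this.mono (fun x hx => EReal.coe_lt_coe_iff.mp hx)

private lemma ev_gt (g : ℝ → ℝ) (c : ℝ)
    (h : Filter.liminf (fun r => ((g r : ℝ) : EReal)) atTop = (c : EReal)) (b : ℝ) (hb : b < c) :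
    ∀ᶠ r in atTop, b < g r := by
  have := Filter.eventually_lt_of_lt_liminf (b := (b : EReal)) (u := fun r => ((g r : ℝ) : EReal))
    (by rw [h]; exact_mod_cast hb)
  exact this.mono (fun x hx => EReal.coe_lt_coe_iff.mp hx)

private lemma liminf_le_of_freq (g : ℝ → ℝ) (c : ℝ)
    (h : Filter.liminf (fun r => ((g r : ℝ) : EReal)) atTop = (c : EReal)) (b : ℝ)
    (hb : ∃ᶠ r in atTop, g r ≤ b) : c ≤ b := by
  have : Filter.liminf (fun r => ((g r : ℝ) : EReal)) atTop ≤ (b : EReal) :=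
    Filter.liminf_le_of_frequently_le (hb.mono fun x hx => by exact_mod_cast hx)
  rw [h] at this; exact_mod_cast this

set_option maxHeartbeats 2000000 in
theorem statement14 (T1 T2 : ℝ → ℝ)
    (hpos1 : ∀ r, 1 ≤ r → 0 < T1 r) (hpos2 : ∀ r, 1 ≤ r → 0 < T2 r)
    (hmono1 : MonotoneOn T1 (Set.Ici 1)) (hmono2 : MonotoneOn T2 (Set.Ici 1))
    (hunb1 : ∀ M : ℝ, ∃ r, 1 ≤ r ∧ M < T1 r) (hunb2 : ∀ M : ℝ, ∃ r, 1 ≤ r ∧ M < T2 r)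
    (ρ1 ρ2 : ℝ) (h1 : lowerGrowthOrder T1 = (ρ1 : EReal)) (h2 : lowerGrowthOrder T2 = (ρ2 : EReal))
    (hρ10 : 0 ≤ ρ1) (hρ12 : ρ1 < ρ2)
    (φ : ℝ → ℝ) (hφpos : ∀ r, 1 ≤ r → 0 < φ r) (hφmono : MonotoneOn φ (Set.Ici 1))
    (hφo : (fun r => Real.log (φ r)) =o[Filter.atTop] Real.log) :
    1 - ρ1 / ρ2 ≤ upperLogDens {r | 1 ≤ r ∧ φ r * T1 r < T2 r} ∧
    upperLinDens {r | 1 ≤ r ∧ φ r * T1 r < T2 r} = 1 := by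
  set P : Set ℝ := {r | 1 ≤ r ∧ φ r * T1 r < T2 r} with hPdef
  have hρ2pos : 0 < ρ2 := lt_of_le_of_lt hρ10 hρ12
  -- measurability of P
  have hPmeas : MeasurableSet P := by
    have hF : Monotone (fun r : ℝ => φ (max r 1) * T1 (max r 1)) := by
      intro x y hxy
      have h1x : (1:ℝ) ≤ max x 1 := le_max_right _ _
      have h1y : (1:ℝ) ≤ max y 1 := le_max_right _ _
      have hm : max x 1 ≤ max y 1 := max_le_max hxy le_rfl
      exact mul_le_mul (hφmono h1x h1y hm) (hmono1 h1x h1y hm) (hpos1 _ h1x).le (hφpos _ h1y).le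
    have hG : Monotone (fun r : ℝ => T2 (max r 1)) := fun x y hxy =>
      hmono2 (mem_Ici.mpr (le_max_right x 1)) (mem_Ici.mpr (le_max_right y 1)) (max_le_max hxy le_rfl)
    have heq : P =
        Ici 1 ∩ {r : ℝ | (fun r => φ (max r 1) * T1 (max r 1)) r < (fun r => T2 (max r 1)) r} := by
      rw [hPdef]; ext r
      simp only [mem_setOf_eq, mem_inter_iff, mem_Ici]
      constructor
      · rintro ⟨ha, hb⟩; exact ⟨ha, by simp only [max_eq_left ha]; exact hb⟩
      · rintro ⟨ha, hb⟩; refine ⟨ha, ?_⟩; simpa only [max_eq_left ha] using hb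
    rw [heq]
    exact measurableSet_Ici.inter (measurableSet_lt hF.measurable hG.measurable)
  -- little-o extraction
  have hφev : ∀ ε : ℝ, 0 < ε → ∀ᶠ r in atTop, Real.log (φ r) ≤ ε * Real.log r := by
    intro ε hε
    filter_upwards [hφo.def hε, eventually_ge_atTop (1:ℝ)] with r hr hr1
    calc Real.log (φ r) ≤ ‖Real.log (φ r)‖ := le_abs_self _
      _ ≤ ε * ‖Real.log r‖ := hr
      _ = ε * Real.log r := by rw [Real.norm_eq_abs, abs_of_nonneg (Real.log_nonneg hr1)]
  -- eventual upper bound 1 for the log-density quotient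
  have hfub : ∀ᶠ r in atTop, (∫ t in P ∩ Icc 1 r, 1/t) / Real.log r ≤ 1 := by
    filter_upwards [eventually_ge_atTop (2:ℝ)] with r hr
    have hr1 : (1:ℝ) ≤ r := by linarith
    have hlr : 0 < Real.log r := Real.log_pos (by linarith)
    rw [div_le_one hlr]
    have := int_le 1 r one_pos hr1 (P ∩ Icc 1 r) inter_subset_right
    simpa [Real.log_one] using this
  ---- PART A ----
  have keyA : ∀ ε : ℝ, 0 < ε → ε < ρ2 → 1 - (ρ1 + 2*ε)/(ρ2 - ε) ≤ upperLogDens P := by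
    intro ε hε hερ2
    set κ := (ρ1 + 2*ε)/(ρ2 - ε) with hκdef
    have hρ2ε : 0 < ρ2 - ε := by linarith
    have hκpos : 0 < κ := div_pos (by linarith) hρ2ε
    obtain ⟨t0', ht0'⟩ := eventually_atTop.mp (ev_gt _ ρ2 h2 (ρ2 - ε) (by linarith))
    set t0 := max t0' 2 with ht0def
    have ht0_2 : (2:ℝ) ≤ t0 := le_max_right _ _
    have hT2' : ∀ t, t0 ≤ t → (ρ2 - ε) * Real.log t < Real.log (T2 t) := by
      intro t ht
      have h := ht0' t (le_trans (le_max_left _ _) ht)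
      have hlt : 0 < Real.log t := Real.log_pos (by linarith)
      rw [lt_div_iff₀ hlt] at h
      linarith
    have hfreq : ∃ᶠ r in atTop, 1 - κ ≤ (∫ t in P ∩ Icc 1 r, 1/t) / Real.log r := by
      have hf1 := freq_lt _ ρ1 h1 (ρ1 + ε) (by linarith)
      have hev : ∀ᶠ r in atTop, Real.log (φ r) ≤ ε * Real.log r ∧ t0 ≤ r ∧
          Real.log t0 ≤ κ * Real.log r := by
        have h3 : ∀ᶠ r in atTop, Real.log t0 ≤ κ * Real.log r :=
          (Real.tendsto_log_atTop.const_mul_atTop hκpos).eventually_ge_atTop _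
        filter_upwards [hφev ε hε, eventually_ge_atTop t0, h3] with r ha hb hc
        exact ⟨ha, hb, hc⟩
      refine (hf1.and_eventually hev).mono ?_
      rintro r ⟨hrT1, hrφ, hrt0, hrs⟩
      have hr2 : (2:ℝ) ≤ r := le_trans ht0_2 hrt0
      have hr1' : (1:ℝ) ≤ r := by linarith
      have hlr : 0 < Real.log r := Real.log_pos (by linarith)
      have hT1r : Real.log (T1 r) < (ρ1 + ε) * Real.log r := by
        rw [div_lt_iff₀ hlr] at hrT1; exact hrT1
      set s := Real.exp (κ * Real.log r) with hsdef
      have hs1 : (1:ℝ) ≤ s := by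
        rw [hsdef]
        calc (1:ℝ) = Real.exp 0 := Real.exp_zero.symm
          _ ≤ _ := Real.exp_le_exp.mpr (by positivity)
      have ht0s : t0 ≤ s := by
        have h' : t0 = Real.exp (Real.log t0) := (Real.exp_log (by linarith)).symm
        rw [h', hsdef]; exact Real.exp_le_exp.mpr hrs
      have hsub : Icc 1 r \ P ⊆ Icc 1 s := by
        rintro t ⟨⟨ht1, htr⟩, htP⟩
        refine ⟨ht1, ?_⟩
        have hE : T2 t ≤ φ t * T1 t := by
          by_contra hcon
          exact htP ⟨ht1, not_le.mp hcon⟩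
        rcases le_or_gt t0 t with h | h
        · have hφt : 0 < φ t := hφpos t ht1
          have hT1t : 0 < T1 t := hpos1 t ht1
          have hlog1 : Real.log (T2 t) ≤ Real.log (φ t * T1 t) :=
            Real.log_le_log (hpos2 t ht1) hE
          rw [Real.log_mul hφt.ne' hT1t.ne'] at hlog1
          have hφtr : Real.log (φ t) ≤ Real.log (φ r) :=
            Real.log_le_log hφt (hφmono ht1 hr1' htr)
          have hT1tr : Real.log (T1 t) ≤ Real.log (T1 r) :=
            Real.log_le_log hT1t (hmono1 ht1 hr1' htr)
          have hbig : Real.log (T2 t) ≤ (ρ1 + 2*ε) * Real.log r := by nlinarith [hrφ]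
          have hlt2 : (ρ2 - ε) * Real.log t < (ρ1 + 2*ε) * Real.log r :=
            lt_of_lt_of_le (hT2' t h) hbig
          have hlogt : Real.log t < κ * Real.log r := by
            rw [hκdef, div_mul_eq_mul_div, lt_div_iff₀ hρ2ε]
            nlinarith [hlt2]
          calc t = Real.exp (Real.log t) := (Real.exp_log (by linarith)).symm
            _ ≤ s := by rw [hsdef]; exact Real.exp_le_exp.mpr hlogt.le
        · exact le_trans (by linarith) ht0s
      have hik := MeasureTheory.integral_inter_add_diff (μ := volume) (s := Icc 1 r) (t := P)
        hPmeas (myIntegrable 1 r one_pos)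
      have hIr : (∫ t in Icc 1 r, 1/t) = Real.log r := by
        rw [myIntegral 1 r one_pos hr1', Real.log_one, sub_zero]
      have hEle : (∫ t in Icc 1 r \ P, 1/t) ≤ κ * Real.log r := by
        have h' := int_le 1 s one_pos hs1 _ hsub
        rw [hsdef] at h'
        simpa [Real.log_one, Real.log_exp] using h'
      rw [inter_comm] at hik
      rw [le_div_iff₀ hlr]
      linarith [hik, hIr, hEle]
    have := le_limsup_of_frequently_le hfreq (isBoundedUnder_of_eventually_le hfub)
    exact this
  have partA : 1 - ρ1/ρ2 ≤ upperLogDens P := by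
    have h0 : 1 - (ρ1 + 2*(0:ℝ))/(ρ2 - 0) = 1 - ρ1/ρ2 := by norm_num
    have hc : ContinuousAt (fun ε : ℝ => 1 - (ρ1 + 2*ε)/(ρ2 - ε)) 0 := by
      have hdiv : ContinuousAt (fun ε : ℝ => (ρ1 + 2*ε)/(ρ2 - ε)) 0 :=
        ContinuousAt.div (by fun_prop) (by fun_prop) (by simpa using hρ2pos.ne')
      exact continuousAt_const.sub hdiv
    have htend : Tendsto (fun ε : ℝ => 1 - (ρ1 + 2*ε)/(ρ2 - ε)) (nhdsWithin 0 (Ioi 0))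
        (nhds (1 - ρ1/ρ2)) := by
      rw [← h0]
      exact hc.tendsto.mono_left nhdsWithin_le_nhds
    refine le_of_tendsto htend ?_
    filter_upwards [Ioo_mem_nhdsGT hρ2pos] with ε hε
    exact keyA ε hε.1 hε.2
  ---- PART B ----
  have hμfin : ∀ r : ℝ, volume (P ∩ Icc 1 r) ≠ ⊤ := fun r =>
    ((measure_mono inter_subset_right).trans_lt measure_Icc_lt_top).ne
  have hlin : ∀ r : ℝ, (∫ t in P ∩ Icc 1 r, (1:ℝ)) = (volume (P ∩ Icc 1 r)).toReal := by
    intro r; rw [MeasureTheory.setIntegral_const, smul_eq_mul, mul_one]; rfl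
  have hlinub : ∀ᶠ r in atTop, (∫ t in P ∩ Icc 1 r, (1:ℝ)) / r ≤ 1 := by
    filter_upwards [eventually_ge_atTop (1:ℝ)] with r hr
    rw [hlin, div_le_one (by linarith)]
    have hm : volume (P ∩ Icc 1 r) ≤ volume (Icc 1 r) := measure_mono inter_subset_right
    rw [Real.volume_Icc] at hm
    calc (volume (P ∩ Icc 1 r)).toReal ≤ (ENNReal.ofReal (r - 1)).toReal :=
          ENNReal.toReal_mono ENNReal.ofReal_ne_top hm
      _ = r - 1 := ENNReal.toReal_ofReal (by linarith)
      _ ≤ r := by linarith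
  have hlinlb : ∀ᶠ r in atTop, (0:ℝ) ≤ (∫ t in P ∩ Icc 1 r, (1:ℝ)) / r := by
    filter_upwards [eventually_ge_atTop (1:ℝ)] with r hr
    have h' : (0:ℝ) ≤ (∫ t in P ∩ Icc 1 r, (1:ℝ)) := by rw [hlin]; positivity
    have hr0 : (0:ℝ) < r := by linarith
    positivity
  have hub : upperLinDens P ≤ 1 := by
    have := Filter.limsup_le_of_le
      ((isBoundedUnder_of_eventually_ge hlinlb).isCoboundedUnder_le) hlinub
    exact this
  have hlb : 1 ≤ upperLinDens P := by
    by_contra hcon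
    push_neg at hcon
    obtain ⟨L, hLdef⟩ : ∃ L : ℝ, upperLinDens P = L := ⟨_, rfl⟩
    rw [hLdef] at hcon
    set c := max ((L+1)/2) 0 with hcdef
    have hc1 : c < 1 := by
      apply max_lt _ one_pos
      have := hcon; linarith
    have hc0 : (0:ℝ) ≤ c := le_max_right _ _
    have hevc : ∀ᶠ r in atTop, (∫ t in P ∩ Icc 1 r, (1:ℝ)) / r < c := by
      have hL2 : L < (L+1)/2 := by linarith
      have hL2' : Filter.limsup (fun r => (∫ t in P ∩ Icc 1 r, (1:ℝ)) / r) atTop < (L+1)/2 := by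
        rw [show Filter.limsup (fun r => (∫ t in P ∩ Icc 1 r, (1:ℝ)) / r) atTop
          = upperLinDens P from rfl, hLdef]
        exact hL2
      have h' := eventually_lt_of_limsup_lt hL2' (isBoundedUnder_of_eventually_le hlinub)
      exact h'.mono fun r hr => lt_of_lt_of_le hr (le_max_left _ _)
    set θ := (1 - c)/2 with hθdef
    have hθpos : 0 < θ := by rw [hθdef]; linarith
    have hθ1 : θ < 1 := by rw [hθdef]; linarith
    have step1 : ∀ᶠ r in atTop, ∃ s, θ*r ≤ s ∧ s ≤ r ∧ 1 ≤ s ∧ T2 s ≤ φ s * T1 s := by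
      filter_upwards [hevc, eventually_ge_atTop (max 1 (2/θ))] with r hrc hrge
      have hr1 : (1:ℝ) ≤ r := le_trans (le_max_left _ _) hrge
      have hr0 : (0:ℝ) < r := by linarith
      have hrθ : 2/θ ≤ r := le_trans (le_max_right _ _) hrge
      have hθr2 : 2 ≤ θ * r := by
        rw [div_le_iff₀ hθpos] at hrθ; nlinarith
      by_contra hno
      push_neg at hno
      have hsub : Icc 1 r \ P ⊆ Icc 1 (θ*r) := by
        rintro t ⟨⟨ht1, htr⟩, htP⟩
        refine ⟨ht1, ?_⟩
        by_contra hgt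
        push_neg at hgt
        exact htP ⟨ht1, hno t hgt.le htr ht1⟩
      have hmeq := measure_inter_add_diff (μ := volume) (Icc (1:ℝ) r) hPmeas
      have hA : volume (Icc 1 r ∩ P) ≤ ENNReal.ofReal (c*r) := by
        rw [inter_comm]
        have hval : (volume (P ∩ Icc 1 r)).toReal < c * r := by
          have h' := hrc; rw [hlin, div_lt_iff₀ hr0] at h'; exact h'
        exact (ENNReal.le_ofReal_iff_toReal_le (hμfin r) (by positivity)).mpr hval.le
      have hB : volume (Icc 1 r \ P) ≤ ENNReal.ofReal (θ*r - 1) := by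
        calc volume (Icc 1 r \ P) ≤ volume (Icc 1 (θ*r)) := measure_mono hsub
          _ = ENNReal.ofReal (θ*r - 1) := Real.volume_Icc
      have hsum : ENNReal.ofReal (r-1) ≤ ENNReal.ofReal (c*r) + ENNReal.ofReal (θ*r-1) := by
        rw [← Real.volume_Icc (a := (1:ℝ)) (b := r), ← hmeq]
        exact add_le_add hA hB
      rw [← ENNReal.ofReal_add (by positivity) (by linarith),
        ENNReal.ofReal_le_ofReal_iff (by nlinarith)] at hsum
      rw [hθdef] at hsum
      nlinarith
    obtain ⟨R, hR⟩ := eventually_atTop.mp step1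
    have step2 : ∀ u, max 1 (θ * R) ≤ u → T2 u ≤ φ (u/θ) * T1 (u/θ) := by
      intro u hu
      have hu1 : (1:ℝ) ≤ u := le_trans (le_max_left _ _) hu
      have huR : θ * R ≤ u := le_trans (le_max_right _ _) hu
      have huθR : R ≤ u/θ := by rw [le_div_iff₀ hθpos]; nlinarith
      obtain ⟨s, hs1, hs2, hs3, hs4⟩ := hR (u/θ) huθR
      have hθu : θ*(u/θ) = u := by field_simp
      have hus : u ≤ s := by rw [hθu] at hs1; exact hs1
      have huθ1 : (1:ℝ) ≤ u/θ := le_trans hs3 hs2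
      calc T2 u ≤ T2 s := hmono2 hu1 (le_trans hu1 hus) hus
        _ ≤ φ s * T1 s := hs4
        _ ≤ φ (u/θ) * T1 (u/θ) := mul_le_mul (hφmono hs3 huθ1 hs2) (hmono1 hs3 huθ1 hs2)
            (hpos1 s hs3).le (hφpos _ huθ1).le
    set ε := (ρ2 - ρ1)/4 with hεdef
    have hεpos : 0 < ε := by rw [hεdef]; linarith
    have hlogθ : Real.log θ < 0 := Real.log_neg hθpos hθ1
    set V0 := Real.exp ((ρ1 + 3*ε) * (-Real.log θ) / ε) with hV0
    have hfreq2 : ∃ᶠ u in atTop, Real.log (T2 u) / Real.log u ≤ ρ1 + 3*ε := by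
      have htendθ : Tendsto (fun v : ℝ => θ * v) atTop atTop :=
        Tendsto.const_mul_atTop hθpos tendsto_id
      apply htendθ.frequently
      have hf1 := freq_lt _ ρ1 h1 (ρ1 + ε) (by linarith)
      have hev2 : ∀ᶠ v in atTop, Real.log (φ v) ≤ ε * Real.log v ∧ V0 ≤ v ∧
          max 1 (θ*R) ≤ θ * v ∧ 2/θ ≤ v := by
        filter_upwards [hφev ε hεpos, eventually_ge_atTop V0,
          htendθ.eventually_ge_atTop (max 1 (θ*R)), eventually_ge_atTop (2/θ)] with v a b cc d
        exact ⟨a, b, cc, d⟩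
      refine (hf1.and_eventually hev2).mono ?_
      rintro v ⟨hv1, hvφ, hvV0, hvθ, hv2θ⟩
      have hθv2 : 2 ≤ θ * v := by rw [div_le_iff₀ hθpos] at hv2θ; nlinarith
      have hvgt1 : 1 < v := by nlinarith
      have hlv : 0 < Real.log v := Real.log_pos hvgt1
      have hT1v : Real.log (T1 v) < (ρ1 + ε) * Real.log v := by
        rw [div_lt_iff₀ hlv] at hv1; exact hv1
      have hu1 : 1 < θ * v := by linarith
      have huθ : θ * v / θ = v := mul_div_cancel_left₀ v (ne_of_gt hθpos)
      have hkey := step2 (θ * v) hvθ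
      rw [huθ] at hkey
      have hlogu : Real.log (θ * v) = Real.log θ + Real.log v :=
        Real.log_mul (ne_of_gt hθpos) (by positivity)
      have hlu : 0 < Real.log (θ * v) := Real.log_pos hu1
      have hltφ : Real.log (T2 (θ * v)) ≤ (ρ1 + 2*ε) * Real.log v := by
        have h1' : Real.log (T2 (θ * v)) ≤ Real.log (φ v * T1 v) :=
          Real.log_le_log (hpos2 _ hu1.le) hkey
        rw [Real.log_mul (hφpos v hvgt1.le).ne' (hpos1 v hvgt1.le).ne'] at h1'
        nlinarith
      have hV0' : (ρ1 + 3*ε) * (-Real.log θ) / ε ≤ Real.log v := by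
        calc (ρ1 + 3*ε) * (-Real.log θ) / ε = Real.log V0 := (Real.log_exp _).symm
          _ ≤ Real.log v := Real.log_le_log (Real.exp_pos _) hvV0
      have hstep : (ρ1 + 2*ε) * Real.log v ≤ (ρ1 + 3*ε) * Real.log (θ * v) := by
        rw [hlogu]
        rw [div_le_iff₀ hεpos] at hV0'
        nlinarith
      rw [div_le_iff₀ hlu]
      linarith
    have hfin := liminf_le_of_freq _ ρ2 h2 (ρ1 + 3*ε) hfreq2
    rw [hεdef] at hfin; linarith
  exact ⟨partA, le_antisymm hub hlb⟩
end

section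
/- Let T1, T2 : (1,∞) → (0,∞) be continuous non-decreasing functions, both of order ρ ∈ (0,∞), whose types satisfy 0 < τ(T1) < τ(T2) < ∞, and let C ∈ (1, τ(T2)/τ(T1)). Then the set Q = {r ≥ 1 : C·T1(r) < T2(r)} has upper linear density at least 1 − C^{1/ρ}·(τ(T1)/τ(T2))^{1/ρ}. -/
open MeasureTheory Filter Set

theorem statement15 (T1 T2 : ℝ → ℝ)
    (hpos1 : ∀ r, 1 < r → 0 < T1 r) (hpos2 : ∀ r, 1 < r → 0 < T2 r)
    (hcont1 : ContinuousOn T1 (Set.Ioi 1)) (hcont2 : ContinuousOn T2 (Set.Ioi 1))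
    (hmono1 : MonotoneOn T1 (Set.Ioi 1)) (hmono2 : MonotoneOn T2 (Set.Ioi 1))
    (ρ : ℝ) (hρ : 0 < ρ)
    (h1 : growthOrder T1 = (ρ : EReal)) (h2 : growthOrder T2 = (ρ : EReal))
    (τ1 τ2 : ℝ) (ht1 : growthTypeOf T1 ρ = (τ1 : EReal)) (ht2 : growthTypeOf T2 ρ = (τ2 : EReal))
    (hτ10 : 0 < τ1) (hτ12 : τ1 < τ2)
    (C : ℝ) (hC1 : 1 < C) (hC2 : C < τ2 / τ1) :
    1 - C ^ (1 / ρ) * (τ1 / τ2) ^ (1 / ρ) ≤ upperLinDens {r | 1 ≤ r ∧ C * T1 r < T2 r} := by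
  set Q : Set ℝ := {r | 1 ≤ r ∧ C * T1 r < T2 r} with hQdef
  have hτ20 : 0 < τ2 := hτ10.trans hτ12
  have hC0 : 0 < C := lt_trans one_pos hC1
  have hκ0 : 0 < C * (τ1 / τ2) := by positivity
  have hκ1 : C * (τ1 / τ2) < 1 := by
    rw [mul_div_assoc', div_lt_one hτ20]
    calc C * τ1 < (τ2 / τ1) * τ1 := by exact mul_lt_mul_of_pos_right hC2 hτ10
      _ = τ2 := by field_simp
  -- key claim
  have key : ∀ m : ℝ, C * (τ1 / τ2) < m → m < 1 → 1 - m ^ (1 / ρ) ≤ upperLinDens Q := by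
    intro m hm1 hm2
    have hm0 : 0 < m := hκ0.trans hm1
    have hCτ1m : C * τ1 / m < τ2 := by
      rw [div_lt_iff₀ hm0]
      have h := mul_lt_mul_of_pos_right hm1 hτ20
      calc C * τ1 = C * (τ1 / τ2) * τ2 := by field_simp
        _ < m * τ2 := h
        _ = τ2 * m := mul_comm _ _
    set τ2' : ℝ := (τ2 + C * τ1 / m) / 2 with hτ2'def
    have hτ2'pos : 0 < τ2' := by
      have : 0 < C * τ1 / m := by positivity
      rw [hτ2'def]; linarith
    have hτ2'lt : τ2' < τ2 := by rw [hτ2'def]; linarith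
    have hτ2'gt : C * τ1 / m < τ2' := by rw [hτ2'def]; linarith
    set τ1' : ℝ := m * τ2' / C with hτ1'def
    have hτ1'pos : 0 < τ1' := by positivity
    have hτ1'gt : τ1 < τ1' := by
      rw [hτ1'def, lt_div_iff₀ hC0]
      have := (div_lt_iff₀ hm0).mp hτ2'gt
      linarith [mul_comm τ1 C, mul_comm τ2' m]
    have hCτ1' : C * τ1' = m * τ2' := by
      rw [hτ1'def]; field_simp
    set t : ℝ := m ^ (1 / ρ) with htdef
    have ht0 : 0 < t := Real.rpow_pos_of_pos hm0 _
    have htlt1 : t < 1 := Real.rpow_lt_one hm0.le hm2 (by positivity)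
    have htρ : t ^ ρ = m := by
      rw [htdef, one_div, Real.rpow_inv_rpow hm0.le (ne_of_gt hρ)]
    -- eventual bound for T1
    have hev : ∀ᶠ r in atTop, T1 r / r ^ ρ < τ1' := by
      have hlt : Filter.limsup (fun r => ((T1 r / r ^ ρ : ℝ) : EReal)) Filter.atTop
          < ((τ1' : ℝ) : EReal) := by
        rw [← growthTypeOf, ht1]
        exact_mod_cast hτ1'gt
      have := Filter.eventually_lt_of_limsup_lt hlt
      filter_upwards [this] with r hr
      exact_mod_cast hr
    -- frequent bound for T2
    have hfr : ∃ᶠ r in atTop, τ2' < T2 r / r ^ ρ := by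
      have hlt : ((τ2' : ℝ) : EReal)
          < Filter.limsup (fun r => ((T2 r / r ^ ρ : ℝ) : EReal)) Filter.atTop := by
        rw [← growthTypeOf, ht2]
        exact_mod_cast hτ2'lt
      have := Filter.frequently_lt_of_lt_limsup (by isBoundedDefault) hlt
      exact this.mono fun r hr => by exact_mod_cast hr
    obtain ⟨M, hM⟩ := eventually_atTop.mp hev
    -- frequently the density ratio is at least 1 - t
    have hfreq : ∃ᶠ R in atTop, 1 - t ≤ (∫ u in Q ∩ Set.Icc 1 R, (1 : ℝ)) / R := by
      rw [frequently_atTop]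
      intro b
      obtain ⟨r0, hr0ge, hr0⟩ := frequently_atTop.mp hfr (max (max b M) 2)
      have hr0M : M ≤ r0 := le_trans (le_trans (le_max_right b M) (le_max_left _ 2)) hr0ge
      have hr02 : (2 : ℝ) ≤ r0 := le_trans (le_max_right _ 2) hr0ge
      have hr0b : b ≤ r0 := le_trans (le_trans (le_max_left b M) (le_max_left _ 2)) hr0ge
      have hr0pos : 0 < r0 := by linarith
      have hr01 : 1 < r0 := by linarith
      have hRpos : 0 < r0 / t := by positivity
      have hr0R : r0 < r0 / t := by
        rw [lt_div_iff₀ ht0]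
        nlinarith
      refine ⟨r0 / t, le_trans hr0b hr0R.le, ?_⟩
      have hsub : Set.Ico r0 (r0 / t) ⊆ Q ∩ Set.Icc 1 (r0 / t) := by
        rintro r ⟨hr1, hr2⟩
        have hrgt1 : 1 < r := lt_of_lt_of_le (by linarith) hr1
        have hrpos : 0 < r := by linarith
        refine ⟨⟨hrgt1.le, ?_⟩, ⟨hrgt1.le, hr2.le⟩⟩
        by_contra hcon
        push_neg at hcon
        have hA : τ2' * r0 ^ ρ < T2 r0 := by
          have := hr0
          rw [lt_div_iff₀ (Real.rpow_pos_of_pos hr0pos ρ)] at this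
          linarith
        have hB : T2 r0 ≤ T2 r := hmono2 hr01 hrgt1 hr1
        have hD : T1 r < τ1' * r ^ ρ := by
          have := hM r (le_trans hr0M hr1)
          rw [div_lt_iff₀ (Real.rpow_pos_of_pos hrpos ρ)] at this
          linarith
        have hE : r ^ ρ < r0 ^ ρ / m := by
          have h1 : r ^ ρ < (r0 / t) ^ ρ := Real.rpow_lt_rpow hrpos.le hr2 hρ
          rwa [Real.div_rpow hr0pos.le ht0.le, htρ] at h1
        have : τ2' * r0 ^ ρ < τ2' * r0 ^ ρ := by
          calc τ2' * r0 ^ ρ < T2 r0 := hA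
            _ ≤ T2 r := hB
            _ ≤ C * T1 r := hcon
            _ < C * (τ1' * r ^ ρ) := by exact mul_lt_mul_of_pos_left hD hC0
            _ = m * τ2' * r ^ ρ := by rw [← mul_assoc, hCτ1']
            _ < m * τ2' * (r0 ^ ρ / m) := by
                exact mul_lt_mul_of_pos_left hE (by positivity)
            _ = τ2' * r0 ^ ρ := by field_simp
        exact lt_irrefl _ this
      have hμ : r0 / t - r0 ≤ (volume (Q ∩ Set.Icc 1 (r0 / t))).toReal := by
        have hle := measure_mono (μ := volume) hsub
        have hfin : volume (Q ∩ Set.Icc 1 (r0 / t)) ≠ ⊤ := by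
          refine ne_top_of_le_ne_top ?_ (measure_mono (μ := volume) Set.inter_subset_right)
          simp [Real.volume_Icc]
        have := ENNReal.toReal_mono hfin hle
        rwa [Real.volume_Ico, ENNReal.toReal_ofReal (by linarith)] at this
      rw [setIntegral_const, smul_eq_mul, mul_one, le_div_iff₀ hRpos]
      calc (1 - t) * (r0 / t) = r0 / t - r0 := by field_simp
        _ ≤ (volume (Q ∩ Set.Icc 1 (r0 / t))).toReal := hμ
    -- boundedness above
    have hbdd : IsBoundedUnder (· ≤ ·) atTop
        (fun R => (∫ u in Q ∩ Set.Icc 1 R, (1 : ℝ)) / R) := by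
      refine Filter.isBoundedUnder_of_eventually_le (a := 1) ?_
      filter_upwards [eventually_ge_atTop (1 : ℝ)] with R hR
      rw [setIntegral_const, smul_eq_mul, mul_one]
      have hRpos : (0 : ℝ) < R := by linarith
      rw [div_le_one hRpos]
      have hle := measure_mono (μ := volume) (Set.inter_subset_right : Q ∩ Set.Icc 1 R ⊆ Set.Icc 1 R)
      have hfin : volume (Set.Icc (1:ℝ) R) ≠ ⊤ := by simp [Real.volume_Icc]
      have := ENNReal.toReal_mono hfin hle
      rw [Real.volume_Icc, ENNReal.toReal_ofReal (by linarith)] at this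
      exact le_trans this (by linarith)
    exact Filter.le_limsup_of_frequently_le hfreq hbdd
  -- pass to the limit m → C * (τ1/τ2) from the right
  have hgoal : C ^ (1 / ρ) * (τ1 / τ2) ^ (1 / ρ) = (C * (τ1 / τ2)) ^ (1 / ρ) :=
    (Real.mul_rpow hC0.le (by positivity)).symm
  rw [hgoal]
  set κ : ℝ := C * (τ1 / τ2) with hκdef
  have tend : Tendsto (fun m : ℝ => 1 - m ^ (1 / ρ)) (nhdsWithin κ (Set.Ioi κ))
      (nhds (1 - κ ^ (1 / ρ))) := by
    have hc : ContinuousAt (fun m : ℝ => 1 - m ^ (1 / ρ)) κ := by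
      have h := Real.continuousAt_rpow_const κ (1 / ρ) (Or.inl (ne_of_gt hκ0))
      exact continuousAt_const.sub h
    exact hc.continuousWithinAt.tendsto
  have hev' : ∀ᶠ m in nhdsWithin κ (Set.Ioi κ), 1 - m ^ (1 / ρ) ≤ upperLinDens Q := by
    have h1 : ∀ᶠ m in nhdsWithin κ (Set.Ioi κ), m < 1 :=
      eventually_nhdsWithin_of_eventually_nhds (eventually_lt_nhds hκ1)
    filter_upwards [h1, self_mem_nhdsWithin] with m hm1 hm2
    exact key m hm2 hm1
  exact le_of_tendsto tend hev'
end

section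
/- Let T : [1,∞) → (0,∞) be a non-decreasing function of order ρ ∈ (0,∞) and of type τ ∈ (0,∞), and let C1 > 1 and C2 > 1 be constants satisfying C2^{1/ρ} < C1. Then the set V = {r ≥ 1 : T(C1·r) ≥ C2·T(r)} has upper linear density at least 1 − C2^{1/ρ}/C1. -/
open MeasureTheory Filter Set

set_option maxHeartbeats 1000000

theorem statement16 (T : ℝ → ℝ) (hpos : ∀ r, 1 ≤ r → 0 < T r)
    (hmono : MonotoneOn T (Set.Ici 1))
    (ρ τ : ℝ) (hρ : 0 < ρ) (hτ : 0 < τ)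
    (hord : growthOrder T = (ρ : EReal)) (htyp : growthTypeOf T ρ = (τ : EReal))
    (C1 C2 : ℝ) (hC1 : 1 < C1) (hC2 : 1 < C2) (hC : C2 ^ (1 / ρ) < C1) :
    1 - C2 ^ (1 / ρ) / C1 ≤ upperLinDens {r | 1 ≤ r ∧ C2 * T r ≤ T (C1 * r)} := by
  have hC1pos : (0:ℝ) < C1 := lt_trans one_pos hC1
  have hC2pos : (0:ℝ) < C2 := lt_trans one_pos hC2
  set q : ℝ := C2 ^ (1/ρ) with hq
  have hqpos : 0 < q := Real.rpow_pos_of_pos hC2pos _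
  have hone : (∀ S : Set ℝ, (∫ t in S, (1:ℝ)) = (volume S).toReal) := by
    intro S
    rw [MeasureTheory.setIntegral_const]
    simp
    rfl
  -- It suffices to prove the bound up to an arbitrary δ > 0
  refine le_of_forall_pos_le_add (fun δ hδ => ?_)
  set β : ℝ := q / (q + δ * C1) with hβ
  have hden : 0 < q + δ * C1 := by positivity
  have hβ0 : 0 < β := by positivity
  have hβ1 : β < 1 := by
    rw [hβ, div_lt_one hden]
    nlinarith
  have hkey : 1 - q / (β * C1) = 1 - q / C1 - δ := by
    rw [hβ]
    field_simp
    ring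
  suffices h : 1 - q / (β * C1) ≤ upperLinDens {r | 1 ≤ r ∧ C2 * T r ≤ T (C1 * r)} by
    rw [hkey] at h; linarith
  -- Set up the auxiliary quantities
  set θ : ℝ := β ^ ρ with hθ
  have hθ0 : 0 < θ := Real.rpow_pos_of_pos hβ0 _
  have hθ1 : θ < 1 := Real.rpow_lt_one hβ0.le hβ1 hρ
  set ε : ℝ := τ * (1 - θ) / (1 + θ) with hε
  have hε0 : 0 < ε := div_pos (by nlinarith) (by linarith)
  have hετ : ε < τ := by
    rw [hε, div_lt_iff₀ (by linarith)]
    nlinarith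
  have hqρ : q ^ ρ = C2 := by
    rw [hq, ← Real.rpow_mul hC2pos.le, one_div_mul_cancel hρ.ne', Real.rpow_one]
  have harith : C2 * ((τ + ε) * (θ / C2)) = τ - ε := by
    rw [hε]
    field_simp
    ring
  -- Extract eventual upper bound and frequent lower bound from the type hypothesis
  have htyp' : Filter.limsup (fun r => ((T r / r ^ ρ : ℝ) : EReal)) Filter.atTop = ((τ:ℝ) : EReal) := htyp
  have h1 : ∀ᶠ r in atTop, T r / r ^ ρ < τ + ε := by
    have hlt : Filter.limsup (fun r => ((T r / r ^ ρ : ℝ) : EReal)) Filter.atTop < ((τ + ε : ℝ) : EReal) := by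
      rw [htyp']
      exact_mod_cast (by linarith : τ < τ + ε)
    have := Filter.eventually_lt_of_limsup_lt hlt
    filter_upwards [this] with r hr
    exact_mod_cast hr
  have h2 : ∃ᶠ r in atTop, τ - ε < T r / r ^ ρ := by
    have hlt : ((τ - ε : ℝ) : EReal) < Filter.limsup (fun r => ((T r / r ^ ρ : ℝ) : EReal)) Filter.atTop := by
      rw [htyp']
      exact_mod_cast (by linarith : τ - ε < τ)
    have := Filter.frequently_lt_of_lt_limsup (h := hlt)
    apply this.mono
    intro r hr
    exact_mod_cast hr
  obtain ⟨R0, hR0⟩ := eventually_atTop.1 h1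
  -- Boundedness of the density quotient
  rw [upperLinDens]
  have hbdd : IsBoundedUnder (· ≤ ·) atTop
      (fun r => (∫ t in {r : ℝ | 1 ≤ r ∧ C2 * T r ≤ T (C1 * r)} ∩ Icc 1 r, (1:ℝ)) / r) := by
    refine ⟨1, ?_⟩
    rw [eventually_map]
    filter_upwards [eventually_ge_atTop (1:ℝ)] with r hr
    rw [hone]
    have hv : volume ({r : ℝ | 1 ≤ r ∧ C2 * T r ≤ T (C1 * r)} ∩ Icc 1 r) ≤ ENNReal.ofReal (r - 1) := by
      calc volume ({r : ℝ | 1 ≤ r ∧ C2 * T r ≤ T (C1 * r)} ∩ Icc 1 r) ≤ volume (Icc 1 r) :=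
            measure_mono inter_subset_right
        _ = ENNReal.ofReal (r - 1) := Real.volume_Icc
    have hT : (volume ({r : ℝ | 1 ≤ r ∧ C2 * T r ≤ T (C1 * r)} ∩ Icc 1 r)).toReal ≤ r - 1 := by
      refine le_trans (ENNReal.toReal_mono (by simp) hv) ?_
      rw [ENNReal.toReal_ofReal (by linarith)]
    rw [div_le_one (by linarith)]
    linarith
  refine le_limsup_of_frequently_le ?_ hbdd
  rw [frequently_atTop]
  intro b
  obtain ⟨R, hRge, hRty⟩ := frequently_atTop.1 h2 (max (max C1 (C1 * R0)) (b * q / β))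
  have hRC1 : C1 ≤ R := le_trans (le_max_left _ _) (le_trans (le_max_left _ _) hRge)
  have hRR0 : C1 * R0 ≤ R := le_trans (le_max_right _ _) (le_trans (le_max_left _ _) hRge)
  have hRb : b * q / β ≤ R := le_trans (le_max_right _ _) hRge
  have hRpos : 0 < R := lt_of_lt_of_le hC1pos hRC1
  have hR1 : (1:ℝ) ≤ R := le_trans hC1.le hRC1
  refine ⟨β / q * R, ?_, ?_⟩
  · -- β/q * R ≥ b
    rw [div_le_iff₀ hβ0] at hRb
    rw [div_mul_eq_mul_div, le_div_iff₀ hqpos]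
    nlinarith
  · -- main density estimate at radius β/q * R
    have hsub : Icc (R / C1) (β / q * R) ⊆
        {r : ℝ | 1 ≤ r ∧ C2 * T r ≤ T (C1 * r)} ∩ Icc 1 (β / q * R) := by
      intro s hs
      obtain ⟨hs1, hs2⟩ := hs
      have hs1' : (1:ℝ) ≤ s := le_trans (by rw [le_div_iff₀ hC1pos]; linarith) hs1
      have hsR0 : R0 ≤ s := le_trans (by rw [le_div_iff₀ hC1pos]; nlinarith) hs1
      have hspos : 0 < s := lt_of_lt_of_le one_pos hs1'
      have hsρ : 0 < s ^ ρ := Real.rpow_pos_of_pos hspos _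
      have hRρ : 0 < R ^ ρ := Real.rpow_pos_of_pos hRpos _
      have hTub : T s ≤ (τ + ε) * s ^ ρ := by
        have := hR0 s hsR0
        rw [div_lt_iff₀ hsρ] at this
        linarith
      have hTR : (τ - ε) * R ^ ρ ≤ T R := by
        rw [lt_div_iff₀ hRρ] at hRty
        linarith
      have hRs : R ≤ C1 * s := by
        rw [div_le_iff₀ hC1pos] at hs1
        linarith
      have hmono' : T R ≤ T (C1 * s) := by
        refine hmono (mem_Ici.2 hR1) (mem_Ici.2 ?_) hRs
        calc (1:ℝ) ≤ s := hs1'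
          _ ≤ C1 * s := le_mul_of_one_le_left hspos.le hC1.le
      have hsk : s ^ ρ ≤ (β / q * R) ^ ρ := Real.rpow_le_rpow hspos.le hs2 hρ.le
      have hκρ : (β / q * R) ^ ρ = (θ / C2) * R ^ ρ := by
        rw [Real.mul_rpow (by positivity) hRpos.le, Real.div_rpow hβ0.le hqpos.le, hqρ, hθ]
      have heq : C2 * ((τ + ε) * ((θ / C2) * R ^ ρ)) = (τ - ε) * R ^ ρ := by
        rw [← harith]; ring
      have hchain : C2 * T s ≤ T (C1 * s) := by
        have h01 : C2 * T s ≤ C2 * ((τ + ε) * s ^ ρ) :=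
          mul_le_mul_of_nonneg_left hTub hC2pos.le
        have h02 : C2 * ((τ + ε) * s ^ ρ) ≤ C2 * ((τ + ε) * ((β / q * R) ^ ρ)) :=
          mul_le_mul_of_nonneg_left
            (mul_le_mul_of_nonneg_left hsk (by linarith : (0:ℝ) ≤ τ + ε)) hC2pos.le
        rw [hκρ] at h02
        linarith
      exact ⟨⟨hs1', hchain⟩, hs1', hs2⟩
    have hκRpos : 0 < β / q * R := by positivity
    rw [hone]
    have hvol : ENNReal.ofReal (β / q * R - R / C1) ≤
        volume ({r : ℝ | 1 ≤ r ∧ C2 * T r ≤ T (C1 * r)} ∩ Icc 1 (β / q * R)) := by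
      calc ENNReal.ofReal (β / q * R - R / C1) = volume (Icc (R / C1) (β / q * R)) :=
            Real.volume_Icc.symm
        _ ≤ _ := measure_mono hsub
    have hfin : volume ({r : ℝ | 1 ≤ r ∧ C2 * T r ≤ T (C1 * r)} ∩ Icc 1 (β / q * R)) ≠ ⊤ := by
      refine ne_top_of_le_ne_top ?_ (measure_mono inter_subset_right)
      rw [Real.volume_Icc]
      exact ENNReal.ofReal_ne_top
    have h3 : β / q * R - R / C1 ≤
        (volume ({r : ℝ | 1 ≤ r ∧ C2 * T r ≤ T (C1 * r)} ∩ Icc 1 (β / q * R))).toReal := by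
      rcases le_or_gt (β / q * R - R / C1) 0 with h | h
      · exact le_trans h ENNReal.toReal_nonneg
      · calc β / q * R - R / C1 = (ENNReal.ofReal (β / q * R - R / C1)).toReal :=
              (ENNReal.toReal_ofReal h.le).symm
          _ ≤ _ := ENNReal.toReal_mono hfin hvol
    have heq2 : (β / q * R - R / C1) / (β / q * R) = 1 - q / (β * C1) := by
      field_simp
    rw [← heq2]
    gcongr
end
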